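/- arXiv:2202.11994 — 5 statements merged into one kernel-verified Lean document; each statement's English description precedes it below -/
import Mathlib

section
/- Let G be a directed acyclic graph on a finite vertex set V satisfying Assumption 1 (A ↦ Y). Then W(G) = An(O(G),G). -/
open scoped Classical

noncomputable section

namespace Causal

/-- A directed graph on vertex type `V`, given by its edge relation. -/
structure Digraph (V : Type) where
  Edge : V → V → Prop

namespace Digraph

variable {V : Type}

/-- A directed graph is acyclic if there is no directed cycle. -/
def Acyclic (G : Digraph V) : Prop := ∀ v, ¬ Relation.TransGen G.Edge v v

/-- `G.anc u v` : `u` is an ancestor of `v` (`u ↦ v`), i.e. `u = v` or there is a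
directed path from `u` to `v`. -/
def anc (G : Digraph V) (u v : V) : Prop := Relation.ReflTransGen G.Edge u v

/-- Parents of a vertex. -/
def paSet (G : Digraph V) (v : V) : Set V := {u | G.Edge u v}

/-- Children of a vertex. -/
def chSet (G : Digraph V) (v : V) : Set V := {u | G.Edge v u}

/-- Adjacent vertices. -/
def adjSet (G : Digraph V) (v : V) : Set V := G.paSet v ∪ G.chSet v

/-- Ancestors of a vertex (including itself). -/
def anSet (G : Digraph V) (v : V) : Set V := {u | G.anc u v}

/-- Descendants of a vertex (including itself). -/
def deSet (G : Digraph V) (v : V) : Set V := {u | G.anc v u}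

/-- Parents of a set of vertices. -/
def paOf (G : Digraph V) (S : Set V) : Set V := ⋃ v ∈ S, G.paSet v

/-- Ancestors of a set of vertices. -/
def anOf (G : Digraph V) (S : Set V) : Set V := ⋃ v ∈ S, G.anSet v

/-- Descendants of a set of vertices. -/
def deOf (G : Digraph V) (S : Set V) : Set V := ⋃ v ∈ S, G.deSet v

/-- A path in `G` : a sequence of `n+1` distinct vertices, consecutive ones joined by an
edge of `G` in either direction.  Paths in the usual sense have `1 ≤ n`; `n = 0` is the
degenerate one-vertex path. -/
structure GPath (G : Digraph V) where
  n : ℕ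
  vert : ℕ → V
  inj : ∀ i j, i ≤ n → j ≤ n → vert i = vert j → i = j
  adj : ∀ i, i < n → G.Edge (vert i) (vert (i + 1)) ∨ G.Edge (vert (i + 1)) (vert i)

namespace GPath

variable {G : Digraph V}

/-- First vertex of a path. -/
def first (p : G.GPath) : V := p.vert 0

/-- Last vertex of a path. -/
def last (p : G.GPath) : V := p.vert p.n

/-- `v` lies on the path `p`. -/
def Mem (p : G.GPath) (v : V) : Prop := ∃ i, i ≤ p.n ∧ p.vert i = v

/-- The (interior) vertex at position `i` of `p` is a collider: both incident edges on the
path point into it. -/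
def IsCollider (p : G.GPath) (i : ℕ) : Prop :=
  0 < i ∧ i < p.n ∧ G.Edge (p.vert (i - 1)) (p.vert i) ∧ G.Edge (p.vert (i + 1)) (p.vert i)

/-- A path is causal if all edges point towards its last vertex. -/
def Causal (p : G.GPath) : Prop := ∀ i, i < p.n → G.Edge (p.vert i) (p.vert (i + 1))

/-- A path is blocked by `C` if some non-collider on it lies in `C`, or some collider on it
is not an ancestor of `C`. -/
def Blocked (p : G.GPath) (C : Set V) : Prop :=
  (∃ i, 0 < i ∧ i < p.n ∧ ¬ p.IsCollider i ∧ p.vert i ∈ C) ∨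
  (∃ i, p.IsCollider i ∧ p.vert i ∉ G.anOf C)

end GPath

/-- d-separation: every path between a vertex of `S \ C` and a vertex of `T \ C` is blocked
by `C`.  It holds by convention when `S \ C` or `T \ C` is empty. -/
def dsep (G : Digraph V) (S T C : Set V) : Prop :=
  ∀ s ∈ S \ C, ∀ t ∈ T \ C, ∀ p : G.GPath,
    1 ≤ p.n → p.first = s → p.last = t → p.Blocked C

/-- `l` is a topological ordering of the vertex set `S` : it enumerates `S` without
repetitions so that no later vertex is an ancestor of an earlier one. -/
def IsTopoOrd (G : Digraph V) (S : Set V) (l : List V) : Prop :=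
  l.Nodup ∧ (∀ v, v ∈ l ↔ v ∈ S) ∧ l.Pairwise fun a b => ¬ G.anc b a

/-- There is a directed path from `u` to `v` avoiding the vertex `A` (a trivial such path
when `u = v`). -/
def AvoidReach (G : Digraph V) (A u v : V) : Prop :=
  Relation.ReflTransGen (fun a b => G.Edge a b ∧ a ≠ A ∧ b ≠ A) u v

/-- `N(G)` : non-ancestors of the outcome `Y`. -/
def Nset (G : Digraph V) (A Y : V) : Set V := {v | ¬ G.anc v Y}

/-- `I(G)` : indirect ancestors of `Y`, i.e. vertices `v ≠ A` that are ancestors of `Y`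
such that every directed path from `v` to `Y` contains `A`. -/
def Iset (G : Digraph V) (A Y : V) : Set V :=
  {v | v ≠ A ∧ G.anc v Y ∧ ¬ G.AvoidReach A v Y}

/-- `W(G)` : baseline covariates. -/
def Wset (G : Digraph V) (A Y : V) : Set V :=
  {v | ¬ G.anc A v ∧ G.anc v Y ∧ v ∉ G.Iset A Y}

/-- `M(G)` : mediators (including `Y`). -/
def Mset (G : Digraph V) (A Y : V) : Set V := {v | v ≠ A ∧ G.anc A v ∧ G.anc v Y}

/-- `O(G)` : the optimal adjustment set. -/
def Oset (G : Digraph V) (A Y : V) : Set V := G.paOf (G.Mset A Y) \ (G.Mset A Y ∪ {A})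

/-- `O_min(G)` : the inclusion-minimal subset `O' ⊆ O(G)` with `A ⫫ O(G) \ O' | O'`
(realized as the intersection of all such subsets). -/
def Omin (G : Digraph V) (A Y : V) : Set V :=
  ⋂₀ {O' | O' ⊆ G.Oset A Y ∧ G.dsep {A} (G.Oset A Y \ O') O'}

end Digraph

/-- `chainD Wj l t` : the `t`-th element of the chain `(W_{j_0} = Wj, W_{j_1}, …, W_{j_r})`
where `l = [W_{j_1}, …, W_{j_r}]`. -/
def chainD {V : Type} (Wj : V) (l : List V) (t : ℕ) : V := (Wj :: l).getD t Wj

namespace Digraph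

variable {V : Type}

/-- The W-criterion for a vertex `Wj ∈ W(G) \ O(G)`. -/
def WCrit (G : Digraph V) (A Y Wj : V) : Prop :=
  ∀ l : List V, G.IsTopoOrd (G.chSet Wj ∩ G.Wset A Y) l →
    l ≠ [] ∧
      G.dsep {Wj} (G.Oset A Y)
        (insert (chainD Wj l l.length) (G.paSet (chainD Wj l l.length)) \ {Wj}) ∧
      ∀ t, t < l.length →
        G.Edge (chainD Wj l t) (chainD Wj l (t + 1)) ∧
        G.paSet (chainD Wj l (t + 1)) ⊆ insert (chainD Wj l t) (G.paSet (chainD Wj l t)) ∧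
        G.dsep (G.paSet (chainD Wj l t) \ G.paSet (chainD Wj l (t + 1))) (G.Oset A Y)
          (G.paSet (chainD Wj l (t + 1)))

/-- The M-criterion for a vertex `Mi ∈ M(G) \ {Y}`. -/
def MCrit (G : Digraph V) (A Y Mi : V) : Prop :=
  ∀ l : List V, G.IsTopoOrd (G.chSet Mi ∩ G.Mset A Y) l →
    l ≠ [] ∧
      G.dsep {Mi} (insert A (insert Y (G.Omin A Y)))
        (insert (chainD Mi l l.length) (G.paSet (chainD Mi l l.length)) \ {Mi}) ∧
      ∀ t, t < l.length →
        G.Edge (chainD Mi l t) (chainD Mi l (t + 1)) ∧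
        G.paSet (chainD Mi l (t + 1)) ⊆ insert (chainD Mi l t) (G.paSet (chainD Mi l t)) ∧
        G.dsep (G.paSet (chainD Mi l t) \ G.paSet (chainD Mi l (t + 1)))
          (insert A (insert Y (G.Omin A Y))) (G.paSet (chainD Mi l (t + 1)))

/-- `V*(G)` : the irreducible informative vertex set. -/
def Vstar (G : Digraph V) (A Y : V) : Set V :=
  insert A (insert Y (G.Oset A Y ∪
    {w | w ∈ G.Wset A Y ∧ w ∉ G.Oset A Y ∧ ¬ G.WCrit A Y w} ∪
    {m | m ∈ G.Mset A Y ∧ m ≠ Y ∧ ¬ G.MCrit A Y m}))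

/-- The projection `G_{−v,π}` : saturate all edges from `Pa(v,G) ∪ {v, π_1, …, π_{j−1}}`
into `π_j`, then delete `v` and its incident edges. -/
def proj (G : Digraph V) (v : V) (π : List V) : Digraph V where
  Edge a b :=
    a ≠ v ∧ b ≠ v ∧
      (G.Edge a b ∨ ∃ j, j < π.length ∧ b = π.getD j v ∧
        (G.Edge a v ∨ ∃ j', j' < j ∧ a = π.getD j' v))

/-- There is a directed path from `u` to `v` all of whose non-endpoint vertices lie
in `I` (this includes a plain edge `u → v`). -/
def connVia (G : Digraph V) (I : Set V) (u v : V) : Prop :=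
  ∃ w, Relation.ReflTransGen (fun a b => G.Edge a b ∧ b ∈ I) u w ∧ G.Edge w v

/-- The reduced graph `G⁰` on `V⁰ = V \ (N(G) ∪ I(G))` : connect across `I(G)` and delete
the vertices of `N(G) ∪ I(G)`. -/
def reduce0 (G : Digraph V) (A Y : V) : Digraph V where
  Edge u v :=
    u ∉ G.Nset A Y ∪ G.Iset A Y ∧ v ∉ G.Nset A Y ∪ G.Iset A Y ∧
      G.connVia (G.Iset A Y) u v

/-- The induced subgraph on a vertex set `S`. -/
def induce (G : Digraph V) (S : Set V) : Digraph {v // v ∈ S} where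
  Edge a b := G.Edge a.1 b.1

/-- `π` is the projection ordering used when projecting `v` out of the current graph `H`
(vertex classes taken with respect to the reference graph `Gref`): for `v ∈ W(Gref)` it is a
topological ordering of the children of `v` in `H` lying in `W(Gref)`, followed by `A` if `A`
is a child of `v` in `H`; for `v ∈ M(Gref)` it is a topological ordering of all children
of `v` in `H`. -/
def PiOrd (Gref : Digraph V) (A Y : V) (H : Digraph V) (v : V) (π : List V) : Prop :=
  (v ∈ Gref.Wset A Y ∧
    ∃ l, H.IsTopoOrd (H.chSet v ∩ Gref.Wset A Y) l ∧
      π = l ++ if H.Edge v A then [A] else []) ∨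
  (v ∈ Gref.Mset A Y ∧ H.IsTopoOrd (H.chSet v) π)

/-- One step of the graph-reduction algorithm: visit `v` in the current graph `H`; if `v`
satisfies the W- (resp. M-) criterion in `G` it is projected out, otherwise nothing happens. -/
def AlgStep (G : Digraph V) (A Y : V) (H : Digraph V) (v : V) (H' : Digraph V) : Prop :=
  (v ∈ G.Wset A Y ∧ G.WCrit A Y v ∧
    ∃ l, H.IsTopoOrd (H.chSet v ∩ G.Wset A Y) l ∧
      H' = H.proj v (l ++ if H.Edge v A then [A] else [])) ∨
  (v ∈ G.Mset A Y ∧ G.MCrit A Y v ∧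
    ∃ l, H.IsTopoOrd (H.chSet v) l ∧ H' = H.proj v l) ∨
  (¬ (v ∈ G.Wset A Y ∧ G.WCrit A Y v) ∧ ¬ (v ∈ G.Mset A Y ∧ G.MCrit A Y v) ∧ H' = H)

/-- A run of the graph-reduction algorithm through the list of vertices `l`. -/
inductive AlgRun (G : Digraph V) (A Y : V) : Digraph V → List V → Digraph V → Prop
  | nil (H : Digraph V) : AlgRun G A Y H [] H
  | cons {H H' H'' : Digraph V} {v : V} {l : List V} :
      G.AlgStep A Y H v H' → AlgRun G A Y H' l H'' → AlgRun G A Y H (v :: l) H''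

/-- `H` is an output of the graph-reduction algorithm applied to `G` : starting from the
reduced graph `G⁰`, visit each vertex of `V⁰ \ ({A,Y} ∪ O(G))` exactly once, in any order. -/
def IsAlgOutput (G : Digraph V) (A Y : V) (H : Digraph V) : Prop :=
  ∃ l : List V, l.Nodup ∧
    (∀ v, v ∈ l ↔ (v ∉ G.Nset A Y ∪ G.Iset A Y ∧ v ∉ insert A (insert Y (G.Oset A Y)))) ∧
    G.AlgRun A Y (G.reduce0 A Y) l H

/-- Markov equivalence: same adjacencies and the same unshielded colliders. -/
def MarkovEquiv (G G' : Digraph V) : Prop :=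
  (∀ u v, u ∈ G.adjSet v ↔ u ∈ G'.adjSet v) ∧
  ∀ u w v, (G.Edge u w ∧ G.Edge v w ∧ u ≠ v ∧ u ∉ G.adjSet v) ↔
    (G'.Edge u w ∧ G'.Edge v w ∧ u ≠ v ∧ u ∉ G'.adjSet v)

end Digraph

/-- `p` is a shortest causal path from `v` to the set `S` (of length `0` if `v ∈ S`). -/
def IsShortestCausalTo {V : Type} (G : Digraph V) (p : G.GPath) (v : V) (S : Set V) : Prop :=
  p.Causal ∧ p.first = v ∧ p.last ∈ S ∧
    ∀ q : G.GPath, q.Causal → q.first = v → q.last ∈ S → p.n ≤ q.n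

/-- Length of a shortest causal path from `v` to the set `D`. -/
def causalDist {V : Type} (G : Digraph V) (v : V) (D : Set V) : ℕ :=
  sInf {n | ∃ q : G.GPath, q.Causal ∧ q.first = v ∧ q.last ∈ D ∧ q.n = n}

/-- The distance-to-`D` of a path: the sum over its colliders `C_h` of `|c_h| + 1`, where
`c_h` is a shortest causal path from `C_h` to `D`. -/
def Digraph.GPath.distTo {V : Type} {G : Digraph V} (p : G.GPath) (D : Set V) : ℕ :=
  ∑ i ∈ Finset.range (p.n + 1),
    if p.IsCollider i then causalDist G (p.vert i) D + 1 else 0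

/-- A `Fintype` instance for subtypes of sets over a finite type. -/
noncomputable instance instFintypeMemSet {α : Type} [Finite α] (S : Set α) :
    Fintype {x // x ∈ S} := Set.Finite.fintype (Set.toFinite S)

end Causal

open Causal in
/-- Under Assumption 1 (`A ↦ Y`), `W(G) = An(O(G), G)`. -/
theorem statement_4 {V : Type} [Fintype V]
    (G : Causal.Digraph V) (A Y : V) (hG : G.Acyclic) (hAY : A ≠ Y) (hA : G.anc A Y) :
    G.Wset A Y = G.anOf (G.Oset A Y) := by
  -- Lemma 1: a directed path into a non-descendant of `A` avoids `A`.
  have key1 : ∀ u v : V, G.anc u v → ¬ G.anc A v → G.AvoidReach A u v := by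
    intro u v h
    induction h using Relation.ReflTransGen.head_induction_on with
    | refl => exact fun _ => Relation.ReflTransGen.refl
    | @head a c hac hcv ih =>
      intro hnA
      refine Relation.ReflTransGen.head ⟨hac, ?_, ?_⟩ (ih hnA)
      · rintro rfl; exact hnA (Relation.ReflTransGen.head hac hcv)
      · rintro rfl; exact hnA hcv
  -- Lemma 2: a directed path from a proper descendant of `A` avoids `A` (acyclicity).
  have key2 : ∀ m : V, G.anc m Y → G.anc A m → m ≠ A → G.AvoidReach A m Y := by
    intro m hmY
    induction hmY using Relation.ReflTransGen.head_induction_on with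
    | refl => exact fun _ _ => Relation.ReflTransGen.refl
    | @head a c hac hcY ih =>
      intro hAa haA
      have hcA : c ≠ A := by
        intro hce
        exact hG A (Relation.TransGen.tail' hAa (hce ▸ hac))
      have hAc : G.anc A c := hAa.trans (Relation.ReflTransGen.single hac)
      exact Relation.ReflTransGen.head ⟨hac, haA, hcA⟩ (ih hAc hcA)
  -- Lemma 3: along an `A`-avoiding directed path to `Y`, the first vertex in `M`
  -- (which exists since `Y ∈ M`) has its predecessor in `O`.
  have key3 : ∀ w : V, G.AvoidReach A w Y →
      w ∈ G.Mset A Y ∨ ∃ o ∈ G.Oset A Y, G.anc w o := by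
    intro w h
    induction h using Relation.ReflTransGen.head_induction_on with
    | refl => exact Or.inl ⟨hAY.symm, hA, Relation.ReflTransGen.refl⟩
    | @head a c hac hcY ih =>
      by_cases haM : a ∈ G.Mset A Y
      · exact Or.inl haM
      · right
        rcases ih with hcM | ⟨o, hoO, hco⟩
        · refine ⟨a, ⟨?_, ?_⟩, Relation.ReflTransGen.refl⟩
          · exact Set.mem_biUnion hcM hac.1
          · rintro (h | h)
            · exact haM h
            · exact hac.2.1 h
        · exact ⟨o, hoO, Relation.ReflTransGen.head hac.1 hco⟩
  ext v
  constructor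
  · rintro ⟨hnAv, hvY, hnI⟩
    have hvA : v ≠ A := by rintro rfl; exact hnAv Relation.ReflTransGen.refl
    have hav : G.AvoidReach A v Y := by
      by_contra h
      exact hnI ⟨hvA, hvY, h⟩
    rcases key3 v hav with hM | ⟨o, hoO, hvo⟩
    · exact absurd hM.2.1 hnAv
    · exact Set.mem_biUnion hoO hvo
  · intro hv
    rcases Set.mem_iUnion₂.mp hv with ⟨o, hoO, hvo⟩
    have hvo : G.anc v o := hvo
    rcases Set.mem_iUnion₂.mp hoO.1 with ⟨m, hmM, hom⟩
    have hom : G.Edge o m := hom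
    have hoA : o ≠ A := fun h => hoO.2 (Or.inr h)
    have hoY : G.anc o Y := Relation.ReflTransGen.head hom hmM.2.2
    have hnAo : ¬ G.anc A o := fun h => hoO.2 (Or.inl ⟨hoA, h, hoY⟩)
    have hnAv : ¬ G.anc A v := fun h => hnAo (h.trans hvo)
    have hvY : G.anc v Y := hvo.trans hoY
    refine ⟨hnAv, hvY, ?_⟩
    rintro ⟨-, -, h3⟩
    have hmA : m ≠ A := hmM.1
    have havY : G.AvoidReach A v Y :=
      ((key1 v o hvo hnAo).trans
        (Relation.ReflTransGen.single ⟨hom, hoA, hmA⟩)).trans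
        (key2 m hmM.2.2 hmM.2.1 hmA)
    exact h3 havY
end
end

section
/- Let G be a directed acyclic graph on a finite vertex set V satisfying Assumption 1 (A ↦ Y), in the discrete setting, let a ∈ X_A, and let P be a strictly positive distribution on ∏_{v∈V} X_v that is Markov to G. Define the random variable T := 1{X_A = a}·X_Y / P(X_A = a | X_{O_min(G)}). Suppose M_i ∈ M(G) ∖ {Y} satisfies the M-criterion, with (M_{i_1},…,M_{i_k}) a topological ordering of Ch(M_i,G) ∩ M(G). Then P-almost surely E[T | X_{M_i}, X_{Pa(M_i,G)}] + Σ_{t=1}^{k} ( E[T | X_{M_{i_t}}, X_{Pa(M_{i_t},G)}] − E[T | X_{Pa(M_{i_t},G)}] ) = E[T | X_{({M_{i_k}} ∪ Pa(M_{i_k},G)) ∖ {M_i}}]; in particular, this sum is almost surely equal to a function of the coordinates V ∖ {M_i}. -/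
open scoped Classical

noncomputable section

namespace Causal

/-- The configuration space for state spaces `X v ⊆ ℝ`. -/
abbrev Config {V : Type} (X : V → Finset ℝ) : Type := ∀ v, {r : ℝ // r ∈ X v}

variable {V : Type} [Fintype V] [DecidableEq V]

/-- `P` is a probability mass function on configurations. -/
def IsPMF (X : V → Finset ℝ) (P : Config X → ℝ) : Prop :=
  (∀ x, 0 ≤ P x) ∧ ∑ x : Config X, P x = 1

/-- `P` is strictly positive. -/
def StrictPos (X : V → Finset ℝ) (P : Config X → ℝ) : Prop := ∀ x, 0 < P x

/-- The marginal probability `P(X_S = x_S)`. -/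
def margOn (X : V → Finset ℝ) (P : Config X → ℝ) (S : Set V) (x : Config X) : ℝ :=
  ∑ y : Config X, if ∀ v ∈ S, y v = x v then P y else 0

/-- The conditional probability `p(x_v | x_{Pa(v,G)})` (with the `0/0 = 0` convention). -/
def condK (G : Digraph V) (X : V → Finset ℝ) (P : Config X → ℝ) (v : V) (x : Config X) : ℝ :=
  margOn X P (insert v (G.paSet v)) x / margOn X P (G.paSet v) x

/-- `P` is Markov to `G` : its pmf factorizes as `p(x) = ∏ᵥ p(x_v | x_{Pa(v,G)})`. -/
def MarkovPMF (G : Digraph V) (X : V → Finset ℝ) (P : Config X → ℝ) : Prop :=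
  ∀ x, P x = ∏ v : V, condK G X P v x

/-- The g-formula `Ψ_a(P; G) = Σ_{x : x_A = a} x_Y ∏_{v ≠ A} p(x_v | x_{Pa(v,G)})`. -/
def gFormula (G : Digraph V) (X : V → Finset ℝ) (P : Config X → ℝ) (A Y : V) (a : ℝ) : ℝ :=
  ∑ x : Config X, if (x A : ℝ) = a then
      (x Y : ℝ) * ∏ v ∈ Finset.univ.erase A, condK G X P v x
    else 0

/-- The marginal pmf on the `S`-coordinates. -/
def margPMF (X : V → Finset ℝ) (P : Config X → ℝ) (S : Set V) :
    Config (fun v : {u // u ∈ S} => X v.1) → ℝ :=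
  fun z => ∑ x : Config X, if ∀ v : {u // u ∈ S}, x v.1 = z v then P x else 0

/-- The conditional expectation `E[g | X_S](x)` under `P`. -/
def condExp (X : V → Finset ℝ) (P g : Config X → ℝ) (S : Set V) (x : Config X) : ℝ :=
  (∑ y : Config X, if ∀ v ∈ S, y v = x v then g y * P y else 0) / margOn X P S x

/-- The conditional probability `P(X_A = a | X_S = x_S)`. -/
def condProbEvent (X : V → Finset ℝ) (P : Config X → ℝ) (A : V) (a : ℝ) (S : Set V)
    (x : Config X) : ℝ :=
  (∑ y : Config X, if ((y A : ℝ) = a ∧ ∀ v ∈ S, y v = x v) then P y else 0) / margOn X P S x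

end Causal

namespace Causal

/-- The random variable `T = 1{X_A = a}·X_Y / P(X_A = a | X_{O_min(G)})`. -/
def Tvar {V : Type} [Fintype V] [DecidableEq V] (G : Causal.Digraph V) (X : V → Finset ℝ)
    (P : Config X → ℝ) (A Y : V) (a : ℝ) (x : Config X) : ℝ :=
  (if (x A : ℝ) = a then (x Y : ℝ) else 0) /
    condExp X P (fun y => if (y A : ℝ) = a then 1 else 0) (G.Omin A Y) x

end Causal


set_option linter.unusedSectionVars false
set_option linter.unusedVariables false
namespace Causal

variable {V : Type} [Fintype V] [DecidableEq V] {X : V → Finset ℝ}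

/-- Agreement of two configurations on a set of coordinates. -/
def Agr (S : Set V) (y x : Config X) : Prop := ∀ v ∈ S, y v = x v

lemma Agr.refl (S : Set V) (x : Config X) : Agr S x x := fun _ _ => rfl

lemma Agr.symm {S : Set V} {y x : Config X} (h : Agr S y x) : Agr S x y :=
  fun v hv => (h v hv).symm

lemma Agr.trans {S : Set V} {z y x : Config X} (h : Agr S z y) (h' : Agr S y x) :
    Agr S z x := fun v hv => (h v hv).trans (h' v hv)

lemma Agr.mono {S T : Set V} {y x : Config X} (hST : S ⊆ T) (h : Agr T y x) :
    Agr S y x := fun v hv => h v (hST hv)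

lemma Agr.union {S T : Set V} {y x : Config X} :
    Agr (S ∪ T) y x ↔ Agr S y x ∧ Agr T y x := by
  constructor
  · exact fun h => ⟨fun v hv => h v (Or.inl hv), fun v hv => h v (Or.inr hv)⟩
  · rintro ⟨h1, h2⟩ v (hv | hv)
    · exact h1 v hv
    · exact h2 v hv

/-- A function depends only on the coordinates in `S`. -/
def DepOn (f : Config X → ℝ) (S : Set V) : Prop :=
  ∀ ⦃y x : Config X⦄, Agr S y x → f y = f x

lemma DepOn.mono {f : Config X → ℝ} {S T : Set V} (h : DepOn f S) (hST : S ⊆ T) :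
    DepOn f T := fun y x hyx => h (hyx.mono hST)

/-- Overwrite `x` by `y` on the coordinate set `S`. -/
def patch (S : Set V) (y x : Config X) : Config X :=
  fun v => if v ∈ S then y v else x v

lemma patch_mem {S : Set V} {y x : Config X} {v : V} (hv : v ∈ S) :
    patch S y x v = y v := by simp [patch, hv]

lemma patch_not_mem {S : Set V} {y x : Config X} {v : V} (hv : v ∉ S) :
    patch S y x v = x v := by simp [patch, hv]

lemma agr_patch (S : Set V) (y x : Config X) : Agr S (patch S y x) y :=
  fun v hv => patch_mem hv

lemma patch_patch (S : Set V) (z y x : Config X) :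
    patch S (patch S z y) x = patch S z x := by
  funext v
  by_cases hv : v ∈ S <;> simp [patch, hv]

lemma patch_eq_iff {S : Set V} {z y x₀ : Config X} :
    z = patch S y x₀ ↔ (patch S z x₀ = z ∧ Agr S y z) := by
  constructor
  · rintro rfl
    exact ⟨patch_patch S y x₀ x₀, (agr_patch S y x₀).symm⟩
  · rintro ⟨hz, hyz⟩
    funext v
    by_cases hv : v ∈ S
    · rw [patch_mem hv, hyz v hv]
    · rw [patch_not_mem hv, ← hz, patch_not_mem hv]

open Finset in
/-- Master grouping lemma: group a sum over configurations by the values on `U`,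
with canonical representatives obtained by patching a base configuration `x₀`. -/
lemma sum_group (U : Set V) (x₀ : Config X) (F G : Config X → ℝ) (hF : DepOn F U) :
    ∑ y : Config X, F y * G y =
      ∑ z : Config X, (if patch U z x₀ = z then
        F z * ∑ y : Config X, (if Agr U y z then G y else 0) else 0) := by
  have key : ∀ y : Config X, F y * G y =
      ∑ z : Config X, (if z = patch U y x₀ then F y * G y else 0) := by
    intro y; rw [Finset.sum_ite_eq' Finset.univ (patch U y x₀)]; simp
  calc ∑ y : Config X, F y * G y
      = ∑ y : Config X, ∑ z : Config X, (if z = patch U y x₀ then F y * G y else 0) := by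
        exact Finset.sum_congr rfl fun y _ => key y
    _ = ∑ z : Config X, ∑ y : Config X, (if z = patch U y x₀ then F y * G y else 0) :=
        Finset.sum_comm
    _ = _ := by
        refine Finset.sum_congr rfl fun z _ => ?_
        by_cases hz : patch U z x₀ = z
        · rw [if_pos hz, Finset.mul_sum]
          refine Finset.sum_congr rfl fun y _ => ?_
          by_cases hy : Agr U y z
          · rw [if_pos, if_pos hy, hF hy]
            exact patch_eq_iff.mpr ⟨hz, hy⟩
          · rw [if_neg, if_neg hy, mul_zero]
            intro hc
            exact hy (patch_eq_iff.mp hc).2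
        · rw [if_neg hz]
          refine Finset.sum_eq_zero fun y _ => ?_
          rw [if_neg]
          intro hzy
          exact hz (patch_eq_iff.mp hzy).1

end Causal
namespace Causal

variable {V : Type} [Fintype V] [DecidableEq V] {X : V → Finset ℝ} {G : Digraph V}
  {P : Config X → ℝ}

lemma margOn_def (S : Set V) (x : Config X) :
    margOn X P S x = ∑ y : Config X, (if Agr S y x then P y else 0) := by
  unfold margOn
  exact Finset.sum_congr rfl fun y _ => if_congr Iff.rfl rfl rfl

lemma margOn_pos (hpos : StrictPos X P) (S : Set V) (x : Config X) :
    0 < margOn X P S x := by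
  rw [margOn_def]
  refine Finset.sum_pos' (fun y _ => ?_) ⟨x, Finset.mem_univ x, ?_⟩
  · by_cases h : Agr S y x
    · rw [if_pos h]; exact (hpos y).le
    · rw [if_neg h]
  · rw [if_pos (Agr.refl S x)]; exact hpos x

lemma margOn_agr {S : Set V} {y x : Config X} (hyx : Agr S y x) :
    margOn X P S y = margOn X P S x := by
  rw [margOn_def, margOn_def]
  refine Finset.sum_congr rfl fun z _ => ?_
  by_cases h : Agr S z x
  · rw [if_pos h, if_pos (h.trans hyx.symm)]
  · rw [if_neg h, if_neg (fun h' => h (h'.trans hyx))]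

lemma margOn_depOn (S : Set V) : DepOn (fun x => margOn X P S x) S :=
  fun _ _ h => margOn_agr h

lemma condK_depOn (v : V) :
    DepOn (condK G X P v) (insert v (G.paSet v)) := by
  intro y x hyx
  unfold condK
  rw [margOn_agr (P := P) hyx, margOn_agr (P := P) (hyx.mono (Set.subset_insert _ _))]

lemma sum_coord_fiber (v : V) (F : Config X → ℝ) :
    ∑ y : Config X, F y =
      ∑ a : {r : ℝ // r ∈ X v}, ∑ y : Config X, (if y v = a then F y else 0) := by
  rw [Finset.sum_comm]
  refine Finset.sum_congr rfl fun y _ => ?_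
  rw [Finset.sum_ite_eq Finset.univ (y v) (fun _ => F y)]
  simp

lemma agr_update_iff {W : Set V} {v : V} (hv : v ∉ W) {y x : Config X}
    {a : {r : ℝ // r ∈ X v}} :
    Agr (insert v W) y (Function.update x v a) ↔ (y v = a ∧ Agr W y x) := by
  constructor
  · intro h
    refine ⟨by simpa using h v (Set.mem_insert _ _), fun w hw => ?_⟩
    have hne : w ≠ v := fun he => hv (he ▸ hw)
    have := h w (Set.mem_insert_of_mem _ hw)
    rwa [Function.update_of_ne hne _ _] at this
  · rintro ⟨h1, h2⟩ w hw
    rcases Set.mem_insert_iff.mp hw with rfl | hw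
    · simpa using h1
    · have hne : w ≠ v := fun he => hv (he ▸ hw)
      rw [Function.update_of_ne hne _ _]
      exact h2 w hw

lemma no_self_edge (hG : G.Acyclic) (v : V) : ¬ G.Edge v v :=
  fun h => hG v (Relation.TransGen.single h)

lemma sum_condK (hG : G.Acyclic) (hpos : StrictPos X P) (v : V) (x : Config X) :
    ∑ a : {r : ℝ // r ∈ X v}, condK G X P v (Function.update x v a) = 1 := by
  have hvpa : v ∉ G.paSet v := no_self_edge hG v
  have hden : ∀ a : {r : ℝ // r ∈ X v},
      margOn X P (G.paSet v) (Function.update x v a) = margOn X P (G.paSet v) x := by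
    intro a
    refine margOn_agr (P := P) fun w hw => ?_
    have hne : w ≠ v := fun he => hvpa (he ▸ hw)
    exact Function.update_of_ne hne _ _
  have hnum : ∑ a : {r : ℝ // r ∈ X v},
      margOn X P (insert v (G.paSet v)) (Function.update x v a) =
      margOn X P (G.paSet v) x := by
    simp only [margOn_def]
    rw [Finset.sum_comm]
    refine Finset.sum_congr rfl fun y _ => ?_
    by_cases h : Agr (G.paSet v) y x
    · rw [if_pos h]
      have : ∀ a : {r : ℝ // r ∈ X v},
          (if Agr (insert v (G.paSet v)) y (Function.update x v a) then P y else 0) =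
          (if y v = a then P y else 0) := by
        intro a
        by_cases ha : y v = a
        · rw [if_pos ((agr_update_iff hvpa).mpr ⟨ha, h⟩), if_pos ha]
        · rw [if_neg (fun hc => ha ((agr_update_iff hvpa).mp hc).1), if_neg ha]
      rw [Finset.sum_congr rfl fun a _ => this a,
        Finset.sum_ite_eq Finset.univ (y v) (fun _ => P y)]
      simp
    · rw [if_neg h]
      refine Finset.sum_eq_zero fun a _ => ?_
      rw [if_neg (fun hc => h ((agr_update_iff hvpa).mp hc).2)]
  unfold condK
  simp only [hden]
  rw [← Finset.sum_div, hnum, div_self (ne_of_gt (margOn_pos hpos _ x))]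

/-- Summing out a descendant-closed set of coordinates from the product of kernels. -/
lemma sum_out (hG : G.Acyclic) (hpos : StrictPos X P) (W : Finset V)
    (hW : ∀ w ∈ W, ∀ u, G.Edge w u → u ∈ W) (x : Config X) :
    ∑ y : Config X, (if Agr {a | a ∉ W} y x then ∏ v ∈ W, condK G X P v y else 0) = 1 := by
  classical
  induction W using Finset.strongInduction generalizing x with
  | _ W ih =>
  rcases W.eq_empty_or_nonempty with rfl | hne
  · simp only [Finset.prod_empty]
    have : ∀ y : Config X, (if Agr {a | (a : V) ∉ (∅ : Finset V)} y x then (1:ℝ) else 0)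
        = if y = x then 1 else 0 := by
      intro y
      congr 1
      simp only [eq_iff_iff]
      constructor
      · intro h; funext v; exact Subtype.ext (congrArg Subtype.val (h v (by simp)))
      · rintro rfl; exact Agr.refl _ _
    rw [Finset.sum_congr rfl fun y _ => this y, Finset.sum_ite_eq' Finset.univ x fun _ => (1:ℝ)]
    simp
  · -- pick a minimal element of W with respect to ancestry
    have hwf : WellFounded (fun a b : V => Relation.TransGen G.Edge a b) := by
      have : IsIrrefl V (fun a b : V => Relation.TransGen G.Edge a b) := ⟨hG⟩
      have : IsTrans V (fun a b : V => Relation.TransGen G.Edge a b) :=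
        ⟨fun _ _ _ h h' => h.trans h'⟩
      exact Finite.wellFounded_of_trans_of_irrefl _
    obtain ⟨v, hvW, hvmin⟩ := hwf.has_min (↑W) (by exact_mod_cast hne)
    have hpaW : ∀ u ∈ G.paSet v, u ∉ W := by
      intro u hu huW
      exact hvmin u huW (Relation.TransGen.single hu)
    have hvpa : v ∉ G.paSet v := no_self_edge hG v
    set W' := W.erase v with hW'
    have hW'cc : ∀ w ∈ W', ∀ u, G.Edge w u → u ∈ W' := by
      intro w hw u he
      have hwW : w ∈ W := Finset.mem_of_mem_erase hw
      have huW : u ∈ W := hW w hwW u he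
      refine Finset.mem_erase.mpr ⟨?_, huW⟩
      rintro rfl
      exact hpaW w he hwW
    have hsub : W' ⊂ W := Finset.erase_ssubset hvW
    -- rewrite product
    have hprod : ∀ y : Config X, ∏ u ∈ W, condK G X P u y =
        condK G X P v y * ∏ u ∈ W', condK G X P u y :=
      fun y => (Finset.mul_prod_erase W _ hvW).symm
    have key : ∀ a : {r : ℝ // r ∈ X v}, ∀ y : Config X,
        (if y v = a then (if Agr {u | u ∉ W} y x then ∏ u ∈ W, condK G X P u y else 0) else 0)
        = condK G X P v (Function.update x v a) *
          (if Agr {u | u ∉ W'} y (Function.update x v a)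
            then ∏ u ∈ W', condK G X P u y else 0) := by
      intro a y
      have hiff : (y v = a ∧ Agr {u | u ∉ W} y x) ↔ Agr {u | u ∉ W'} y (Function.update x v a) := by
        have h1 : {u : V | u ∉ W'} = insert v {u : V | u ∉ W} := by
          ext u
          simp only [Set.mem_insert_iff, Set.mem_setOf_eq, hW', Finset.mem_erase]
          constructor
          · intro h
            by_cases huv : u = v
            · exact Or.inl huv
            · exact Or.inr (fun huW => h ⟨huv, huW⟩)
          · rintro (rfl | h) ⟨hne', hW''⟩
            · exact hne' rfl
            · exact h hW''
        have hvW2 : v ∈ W := hvW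
        rw [h1]
        exact (agr_update_iff (by simp only [Set.mem_setOf_eq, not_not]; exact hvW2) (a := a)).symm
      by_cases hc : y v = a ∧ Agr {u | u ∉ W} y x
      · rw [if_pos hc.1, if_pos hc.2, if_pos (hiff.mp hc), hprod y]
        congr 1
        refine condK_depOn v ?_
        intro w hw
        rcases Set.mem_insert_iff.mp hw with rfl | hw
        · rw [Function.update_self]; exact hc.1
        · have hne : w ≠ v := fun he => hvpa (he ▸ hw)
          rw [Function.update_of_ne hne]
          exact hc.2 w (hpaW w hw)
      · push_neg at hc
        by_cases h1 : y v = a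
        · rw [if_pos h1, if_neg (hc h1), if_neg (fun hagr => (hc h1) (hiff.mpr hagr).2), mul_zero]
        · rw [if_neg h1, if_neg (fun hagr => h1 (hiff.mpr hagr).1), mul_zero]
    calc ∑ y : Config X, (if Agr {a | a ∉ W} y x then ∏ u ∈ W, condK G X P u y else 0)
        = ∑ a : {r : ℝ // r ∈ X v}, ∑ y : Config X,
            (if y v = a then (if Agr {u | u ∉ W} y x then ∏ u ∈ W, condK G X P u y else 0) else 0) :=
          sum_coord_fiber v _
      _ = ∑ a : {r : ℝ // r ∈ X v}, condK G X P v (Function.update x v a) *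
            ∑ y : Config X, (if Agr {u | u ∉ W'} y (Function.update x v a)
              then ∏ u ∈ W', condK G X P u y else 0) := by
          refine Finset.sum_congr rfl fun a _ => ?_
          rw [Finset.mul_sum]
          exact Finset.sum_congr rfl fun y _ => key a y
      _ = ∑ a : {r : ℝ // r ∈ X v}, condK G X P v (Function.update x v a) * 1 := by
          refine Finset.sum_congr rfl fun a _ => ?_
          rw [ih W' hsub hW'cc (Function.update x v a)]
      _ = 1 := by
          simp only [mul_one]
          exact sum_condK hG hpos v x

end Causal
namespace Causal

variable {V : Type} [Fintype V] [DecidableEq V] {X : V → Finset ℝ} {G : Digraph V}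
  {P : Config X → ℝ}

/-- Factorization of the marginal over an ancestral set. -/
lemma margOn_ancestral (hG : G.Acyclic) (hpos : StrictPos X P) (hM : MarkovPMF G X P)
    {U : Set V} (hU : ∀ v ∈ U, ∀ u ∈ G.paSet v, u ∈ U) (x : Config X) :
    margOn X P U x = ∏ v ∈ Finset.univ.filter (fun v => v ∈ U), condK G X P v x := by
  have hsplit : ∀ y : Config X, P y =
      (∏ v ∈ Finset.univ.filter (fun v => v ∈ U), condK G X P v y) *
      (∏ v ∈ Finset.univ.filter (fun v => ¬ v ∈ U), condK G X P v y) := by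
    intro y
    rw [hM y, Finset.prod_filter_mul_prod_filter_not]
  have hWcc : ∀ w ∈ Finset.univ.filter (fun v => ¬ (v : V) ∈ U), ∀ u, G.Edge w u →
      u ∈ Finset.univ.filter (fun v => ¬ (v : V) ∈ U) := by
    intro w hw u he
    simp only [Finset.mem_filter, Finset.mem_univ, true_and] at hw ⊢
    exact fun huU => hw (hU u huU w he)
  have hset : {a : V | a ∉ Finset.univ.filter (fun v => ¬ (v : V) ∈ U)} = U := by
    ext a; simp [Set.mem_setOf_eq]
  have key := sum_out (P := P) hG hpos (Finset.univ.filter (fun v => ¬ (v : V) ∈ U)) hWcc x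
  rw [hset] at key
  rw [margOn_def]
  calc ∑ y : Config X, (if Agr U y x then P y else 0)
      = ∑ y : Config X, (∏ v ∈ Finset.univ.filter (fun v => v ∈ U), condK G X P v x) *
          (if Agr U y x then ∏ v ∈ Finset.univ.filter (fun v => ¬ (v : V) ∈ U),
            condK G X P v y else 0) := by
        refine Finset.sum_congr rfl fun y _ => ?_
        by_cases h : Agr U y x
        · rw [if_pos h, if_pos h, hsplit y]
          congr 1
          refine Finset.prod_congr rfl fun v hv => ?_
          simp only [Finset.mem_filter, Finset.mem_univ, true_and] at hv
          refine condK_depOn v fun w hw => ?_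
          rcases Set.mem_insert_iff.mp hw with rfl | hw
          · exact h w hv
          · exact h w (hU v hv w hw)
        · rw [if_neg h, if_neg h, mul_zero]
      _ = _ := by rw [← Finset.mul_sum, key, mul_one]

/-- The canonical-representative sum. -/
def Ncan (P : Config X → ℝ) (x₀ : Config X) (An : Set V) (f : Config X → ℝ) (W : Set V)
    (x : Config X) : ℝ :=
  ∑ z : Config X, if patch An z x₀ = z ∧ Agr W z x then f z * margOn X P An z else 0

lemma sum_eq_Ncan (x₀ : Config X) {An W : Set V} {f : Config X → ℝ}
    (hf : DepOn f An) (hW : W ⊆ An) (x : Config X) :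
    ∑ y : Config X, (if Agr W y x then f y * P y else 0) = Ncan P x₀ An f W x := by
  have h1 : ∀ y : Config X, (if Agr W y x then f y * P y else 0) =
      (if Agr W y x then f y else 0) * P y := by
    intro y; by_cases h : Agr W y x <;> simp [h]
  have hF : DepOn (fun y => if Agr W y x then f y else 0) An := by
    intro y y' hyy'
    simp only
    by_cases h : Agr W y' x
    · rw [if_pos h, if_pos ((hyy'.mono hW).trans h), hf hyy']
    · rw [if_neg h, if_neg (fun hc => h ((hyy'.mono hW).symm.trans hc))]
  rw [Finset.sum_congr rfl fun y _ => h1 y, sum_group An x₀ _ P hF]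
  unfold Ncan
  refine Finset.sum_congr rfl fun z _ => ?_
  by_cases hz : patch An z x₀ = z
  · rw [if_pos hz]
    by_cases hw : Agr W z x
    · rw [if_pos hw, if_pos (show patch An z x₀ = z ∧ Agr W z x from ⟨hz, hw⟩), ← margOn_def]
    · rw [if_neg hw, if_neg (show ¬(patch An z x₀ = z ∧ Agr W z x) from fun hc => hw hc.2),
        zero_mul]
  · rw [if_neg hz, if_neg (show ¬(patch An z x₀ = z ∧ Agr W z x) from fun hc => hz hc.1)]

lemma Ncan_one (x₀ : Config X) {An W : Set V} (hW : W ⊆ An) (x : Config X) :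
    Ncan P x₀ An (fun _ => (1:ℝ)) W x = margOn X P W x := by
  rw [← sum_eq_Ncan x₀ (show DepOn (fun _ => (1:ℝ)) An from fun _ _ _ => rfl) hW x, margOn_def]
  exact Finset.sum_congr rfl fun y _ => by rw [one_mul]

lemma canon_iff {x₀ : Config X} {An : Set V} {z : Config X} :
    patch An z x₀ = z ↔ ∀ v, v ∉ An → z v = x₀ v := by
  constructor
  · intro h v hv
    conv_lhs => rw [← h]
    rw [patch_not_mem hv]
  · intro h
    funext v
    by_cases hv : v ∈ An
    · rw [patch_mem hv]
    · rw [patch_not_mem hv, h v hv]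

open Finset in
/-- The involution identity. -/
lemma Ncan_swap (x₀ : Config X) {An Bs C R : Set V} {F Gf f : Config X → ℝ}
    (hBsAn : Bs ⊆ An) (hCAn : C ⊆ An) (hRAn : R ⊆ An)
    (hCBs : Disjoint C Bs) (hRBs : Disjoint R Bs) (hRC : Disjoint R C)
    (hfact : ∀ z, margOn X P An z = F z * Gf z)
    (hF : DepOn F (An \ Bs)) (hG : DepOn Gf (Bs ∪ C)) (hf : DepOn f (Bs ∪ C)) (x : Config X) :
    Ncan P x₀ An f (C ∪ R) x * Ncan P x₀ An (fun _ => (1:ℝ)) C x =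
      Ncan P x₀ An f C x * Ncan P x₀ An (fun _ => (1:ℝ)) (C ∪ R) x := by
  classical
  set As : Set V := (An \ Bs) \ C with hAs
  have hRAs : R ⊆ As := by
    intro v hv
    exact ⟨⟨hRAn hv, fun hb => hRBs.ne_of_mem hv hb rfl⟩, fun hc => hRC.ne_of_mem hv hc rfl⟩
  have hCAs : Disjoint C As := by
    rw [Set.disjoint_right]; intro v hv; exact fun hc => hv.2 hc
  have hBsAs : Disjoint Bs As := by
    rw [Set.disjoint_right]; intro v hv; exact fun hb => hv.1.2 hb
  unfold Ncan
  rw [Finset.sum_mul_sum, Finset.sum_mul_sum]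
  have main : ∀ z1 z2 : Config X,
      (if patch An z1 x₀ = z1 ∧ Agr (C ∪ R) z1 x then f z1 * margOn X P An z1 else 0) *
      (if patch An z2 x₀ = z2 ∧ Agr C z2 x then (1:ℝ) * margOn X P An z2 else 0) =
      (if patch An (patch As z2 z1) x₀ = patch As z2 z1 ∧ Agr C (patch As z2 z1) x then
        f (patch As z2 z1) * margOn X P An (patch As z2 z1) else 0) *
      (if patch An (patch As z1 z2) x₀ = patch As z1 z2 ∧ Agr (C ∪ R) (patch As z1 z2) x then
        (1:ℝ) * margOn X P An (patch As z1 z2) else 0) := by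
    intro z1 z2
    set w1 := patch As z2 z1 with hw1
    set w2 := patch As z1 z2 with hw2
    have hcanon1 : (patch An w1 x₀ = w1) ↔ (patch An z1 x₀ = z1) := by
      rw [canon_iff, canon_iff]
      constructor <;> intro h v hv
      · have : w1 v = z1 v := patch_not_mem (fun hAs' => hv (hAs'.1.1))
        rw [← this]; exact h v hv
      · rw [hw1, patch_not_mem (fun hAs' => hv (hAs'.1.1))]; exact h v hv
    have hcanon2 : (patch An w2 x₀ = w2) ↔ (patch An z2 x₀ = z2) := by
      rw [canon_iff, canon_iff]
      constructor <;> intro h v hv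
      · have : w2 v = z2 v := patch_not_mem (fun hAs' => hv (hAs'.1.1))
        rw [← this]; exact h v hv
      · rw [hw2, patch_not_mem (fun hAs' => hv (hAs'.1.1))]; exact h v hv
    have hw1C : Agr C w1 z1 := fun v hv => patch_not_mem (fun hAs' => hAs'.2 hv)
    have hw2C : Agr C w2 z2 := fun v hv => patch_not_mem (fun hAs' => hAs'.2 hv)
    have hw2R : Agr R w2 z1 := fun v hv => patch_mem (hRAs hv)
    have hz1R : Agr R z1 w2 := hw2R.symm
    have hagr : (Agr (C ∪ R) z1 x ∧ Agr C z2 x) ↔ (Agr C w1 x ∧ Agr (C ∪ R) w2 x) := by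
      constructor
      · rintro ⟨h1, h2⟩
        rw [Agr.union] at h1
        exact ⟨hw1C.trans h1.1, Agr.union.mpr ⟨hw2C.trans h2, hw2R.trans h1.2⟩⟩
      · rintro ⟨h1, h2⟩
        rw [Agr.union] at h2
        refine ⟨Agr.union.mpr ⟨hw1C.symm.trans h1, hz1R.trans h2.2⟩, hw2C.symm.trans h2.1⟩
    by_cases hc : (patch An z1 x₀ = z1 ∧ Agr (C ∪ R) z1 x) ∧ (patch An z2 x₀ = z2 ∧ Agr C z2 x)
    · obtain ⟨⟨hz1c, hz1a⟩, ⟨hz2c, hz2a⟩⟩ := hc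
      have hargs := hagr.mp ⟨hz1a, hz2a⟩
      rw [if_pos ⟨hz1c, hz1a⟩, if_pos ⟨hz2c, hz2a⟩,
        if_pos ⟨hcanon1.mpr hz1c, hargs.1⟩, if_pos ⟨hcanon2.mpr hz2c, hargs.2⟩]
      -- value computation
      have hfw1 : f w1 = f z1 := hf (fun v hv => patch_not_mem (fun hAs' =>
        (Set.mem_union v Bs C).mp hv |>.elim (fun hb => hBsAs.ne_of_mem hb hAs' rfl)
          (fun hcc => hAs'.2 hcc)))
      have hGw1 : Gf w1 = Gf z1 := hG (fun v hv => patch_not_mem (fun hAs' =>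
        (Set.mem_union v Bs C).mp hv |>.elim (fun hb => hBsAs.ne_of_mem hb hAs' rfl)
          (fun hcc => hAs'.2 hcc)))
      have hGw2 : Gf w2 = Gf z2 := hG (fun v hv => patch_not_mem (fun hAs' =>
        (Set.mem_union v Bs C).mp hv |>.elim (fun hb => hBsAs.ne_of_mem hb hAs' rfl)
          (fun hcc => hAs'.2 hcc)))
      have hCeq : ∀ v ∈ C, z1 v = z2 v := fun v hv => (hz1a v (Or.inl hv)).trans (hz2a v hv).symm
      have hFw1 : F w1 = F z2 := by
        refine hF fun v hv => ?_
        show patch As z2 z1 v = z2 v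
        by_cases hvAs : v ∈ As
        · exact patch_mem hvAs
        · rw [patch_not_mem hvAs]
          have hvC : v ∈ C := by
            by_contra hvC
            exact hvAs ⟨hv, hvC⟩
          exact hCeq v hvC
      have hFw2 : F w2 = F z1 := by
        refine hF fun v hv => ?_
        show patch As z1 z2 v = z1 v
        by_cases hvAs : v ∈ As
        · exact patch_mem hvAs
        · rw [patch_not_mem hvAs]
          have hvC : v ∈ C := by
            by_contra hvC
            exact hvAs ⟨hv, hvC⟩
          exact (hCeq v hvC).symm
      rw [hfact, hfact, hfact, hfact, hfw1, hFw1, hGw1, hFw2, hGw2]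
      ring
    · have himp : ¬ ((patch An w1 x₀ = w1 ∧ Agr C w1 x) ∧
          (patch An w2 x₀ = w2 ∧ Agr (C ∪ R) w2 x)) := by
        rintro ⟨⟨hc1, ha1⟩, ⟨hc2, ha2⟩⟩
        have h := hagr.mpr ⟨ha1, ha2⟩
        exact hc ⟨⟨hcanon1.mp hc1, h.1⟩, ⟨hcanon2.mp hc2, h.2⟩⟩
      have hL : (if patch An z1 x₀ = z1 ∧ Agr (C ∪ R) z1 x then
          f z1 * margOn X P An z1 else 0) *
          (if patch An z2 x₀ = z2 ∧ Agr C z2 x then (1:ℝ) * margOn X P An z2 else 0) = 0 := by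
        rcases not_and_or.mp hc with h | h
        · rw [if_neg h, zero_mul]
        · rw [if_neg h, mul_zero]
      have hR : (if patch An w1 x₀ = w1 ∧ Agr C w1 x then
          f w1 * margOn X P An w1 else 0) *
          (if patch An w2 x₀ = w2 ∧ Agr (C ∪ R) w2 x then (1:ℝ) * margOn X P An w2 else 0)
          = 0 := by
        rcases Classical.em (patch An w1 x₀ = w1 ∧ Agr C w1 x) with he | he
        · rw [if_neg (fun hd => himp ⟨he, hd⟩), mul_zero]
        · rw [if_neg he, zero_mul]
      rw [hL, hR]
  have hinv : Function.Involutive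
      (fun p : Config X × Config X => (patch As p.2 p.1, patch As p.1 p.2)) := by
    rintro ⟨z1, z2⟩
    simp only [Prod.mk.injEq]
    constructor <;> funext v <;> by_cases hv : v ∈ As <;> simp [patch, hv]
  rw [← Finset.sum_product', ← Finset.sum_product', Finset.univ_product_univ]
  exact Fintype.sum_bijective _ hinv.bijective _ _ (fun p => main p.1 p.2)

end Causal
namespace Causal

variable {V : Type} [Fintype V] [DecidableEq V] {X : V → Finset ℝ} {G : Digraph V}
  {P : Config X → ℝ}

lemma condExp_def (g : Config X → ℝ) (S : Set V) (x : Config X) :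
    condExp X P g S x =
      (∑ y : Config X, if Agr S y x then g y * P y else 0) / margOn X P S x := by
  unfold condExp
  congr 1
  exact Finset.sum_congr rfl fun y _ => if_congr Iff.rfl rfl rfl

lemma condExp_agr {g : Config X → ℝ} {S : Set V} {y x : Config X} (h : Agr S y x) :
    condExp X P g S y = condExp X P g S x := by
  rw [condExp_def, condExp_def, margOn_agr (P := P) h]
  congr 1
  refine Finset.sum_congr rfl fun z _ => ?_
  by_cases hz : Agr S z x
  · rw [if_pos hz, if_pos (hz.trans h.symm)]
  · rw [if_neg hz, if_neg (fun hc => hz (hc.trans h))]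

lemma condExp_depOn (g : Config X → ℝ) (S : Set V) :
    DepOn (fun x => condExp X P g S x) S := fun _ _ h => condExp_agr h

/-- Abstract form of `E[f | X_{C ∪ R}] = E[f | X_C]`. -/
lemma condExp_drop (hpos : StrictPos X P) (x₀ : Config X) {An Bs C R : Set V}
    {F Gf f : Config X → ℝ}
    (hBsAn : Bs ⊆ An) (hCAn : C ⊆ An) (hRAn : R ⊆ An)
    (hCBs : Disjoint C Bs) (hRBs : Disjoint R Bs) (hRC : Disjoint R C)
    (hfact : ∀ z, margOn X P An z = F z * Gf z)
    (hF : DepOn F (An \ Bs)) (hG : DepOn Gf (Bs ∪ C)) (hf : DepOn f (Bs ∪ C))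
    (x : Config X) :
    condExp X P f (C ∪ R) x = condExp X P f C x := by
  have hfAn : DepOn f An := hf.mono (Set.union_subset hBsAn hCAn)
  have hCR : C ∪ R ⊆ An := Set.union_subset hCAn hRAn
  rw [condExp_def, condExp_def, sum_eq_Ncan x₀ hfAn hCR x, sum_eq_Ncan x₀ hfAn hCAn x,
    ← Ncan_one (P := P) x₀ hCR x, ← Ncan_one (P := P) x₀ hCAn x]
  have hb : Ncan P x₀ An (fun _ => (1:ℝ)) (C ∪ R) x ≠ 0 := by
    rw [Ncan_one (P := P) x₀ hCR x]
    exact ne_of_gt (margOn_pos hpos _ x)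
  have hd : Ncan P x₀ An (fun _ => (1:ℝ)) C x ≠ 0 := by
    rw [Ncan_one (P := P) x₀ hCAn x]
    exact ne_of_gt (margOn_pos hpos _ x)
  rw [div_eq_div_iff hb hd]
  exact Ncan_swap x₀ hBsAn hCAn hRAn hCBs hRBs hRC hfact hF hG hf x

end Causal
namespace Causal.Digraph

variable {V : Type}

/-- A walk in `G` (like `GPath` but vertices may repeat). -/
structure GWalk (G : Digraph V) where
  n : ℕ
  vert : ℕ → V
  adj : ∀ i, i < n → G.Edge (vert i) (vert (i + 1)) ∨ G.Edge (vert (i + 1)) (vert i)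

namespace GWalk

variable {G : Digraph V}

def IsCol (w : G.GWalk) (i : ℕ) : Prop :=
  0 < i ∧ i < w.n ∧ G.Edge (w.vert (i - 1)) (w.vert i) ∧ G.Edge (w.vert (i + 1)) (w.vert i)

/-- The walk is open (d-connecting) given `C`. -/
def Open (w : G.GWalk) (C : Set V) : Prop :=
  ∀ i, 0 < i → i < w.n →
    (w.IsCol i → w.vert i ∈ G.anOf C) ∧ (¬ w.IsCol i → w.vert i ∉ C)

end GWalk

lemma no_two_cycle {G : Digraph V} (hG : G.Acyclic) {a b : V}
    (h1 : G.Edge a b) (h2 : G.Edge b a) : False :=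
  hG a (Relation.TransGen.head h1 (Relation.TransGen.single h2))

/-- There is an open walk from `s` to `v` of length `≥ 1` whose final edge points into `v`
(`d = true`) or out of `v` (`d = false`). -/
def UW (G : Digraph V) (C : Set V) (s v : V) (d : Bool) : Prop :=
  ∃ w : G.GWalk, 1 ≤ w.n ∧ w.vert 0 = s ∧ w.vert w.n = v ∧ w.Open C ∧
    (if d = true then G.Edge (w.vert (w.n - 1)) v else G.Edge v (w.vert (w.n - 1)))

namespace UW

variable {G : Digraph V} {C : Set V}

lemma base {s u : V} (d : Bool)
    (hnew : if d = true then G.Edge s u else G.Edge u s) : UW G C s u d := by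
  have hadj : ∀ i, i < 1 → G.Edge ((fun i => if i = 0 then s else u) i)
      ((fun i => if i = 0 then s else u) (i + 1)) ∨
      G.Edge ((fun i => if i = 0 then s else u) (i + 1))
      ((fun i => if i = 0 then s else u) i) := by
    intro i hi
    have : i = 0 := by omega
    subst this
    simp only [if_pos rfl, if_neg one_ne_zero]
    cases d with
    | true => exact Or.inl (by simpa using hnew)
    | false => exact Or.inr (by simpa using hnew)
  refine ⟨⟨1, fun i => if i = 0 then s else u, hadj⟩, le_refl 1, ?_, ?_, ?_, ?_⟩
  · show (if 0 = 0 then s else u) = s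
    simp
  · show (if 1 = 0 then s else u) = u
    simp
  · intro i hi hi'
    have hi2  : i < 1 := hi'
    omega
  · show (if d = true then G.Edge (if 1 - 1 = 0 then s else u) u
      else G.Edge u (if 1 - 1 = 0 then s else u))
    simpa using hnew

lemma snoc (hG : G.Acyclic) {s v u : V} {d : Bool} (h : UW G C s v d) (d' : Bool)
    (hnew : if d' = true then G.Edge v u else G.Edge u v)
    (hjunc : if d = true ∧ d' = false then v ∈ G.anOf C else v ∉ C) :
    UW G C s u d' := by
  obtain ⟨w, hn, h0, hlast, hopen, hle⟩ := h
  set n := w.n with hndef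
  clear_value n
  set f : ℕ → V := fun i => if i ≤ n then w.vert i else u with hf
  have hfm : ∀ m, m ≤ n → f m = w.vert m := fun m hm => by simp [hf, hm]
  have hftop : f (n + 1) = u := by simp [hf]
  have hvnotC : v ∉ C ∨ (d = true ∧ d' = false) := by
    by_cases hc : d = true ∧ d' = false
    · exact Or.inr hc
    · rw [if_neg hc] at hjunc; exact Or.inl hjunc
  have hadj : ∀ i, i < n + 1 → G.Edge (f i) (f (i + 1)) ∨ G.Edge (f (i + 1)) (f i) := by
    intro i hi
    by_cases hin : i < n
    · rw [hfm i (by omega), hfm (i + 1) (by omega)]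
      exact w.adj i (hndef ▸ hin)
    · have hieq : i = n := by omega
      rw [hieq, hfm n (le_refl n), hftop, hlast]
      cases d' with
      | true => exact Or.inl (by simpa using hnew)
      | false => exact Or.inr (by simpa using hnew)
  refine ⟨⟨n + 1, f, hadj⟩, Nat.le_add_left 1 n, ?_, ?_, ?_, ?_⟩
  · show f 0 = s
    rw [hfm 0 (by omega)]; exact h0
  · show f (n + 1) = u
    exact hftop
  · intro i hi0 hin
    have hin2 : i < n + 1 := hin
    by_cases hIn : i < n
    · -- old interior vertex
      have hiff : GWalk.IsCol ⟨n + 1, f, hadj⟩ i ↔ w.IsCol i := by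
        have h1 : GWalk.IsCol ⟨n + 1, f, hadj⟩ i ↔
            (0 < i ∧ i < n + 1 ∧ G.Edge (f (i - 1)) (f i) ∧ G.Edge (f (i + 1)) (f i)) :=
          Iff.rfl
        rw [h1, hfm (i - 1) (by omega), hfm i (by omega), hfm (i + 1) (by omega)]
        unfold GWalk.IsCol
        constructor
        · rintro ⟨a, _, c, dd⟩; exact ⟨a, hndef ▸ hIn, c, dd⟩
        · rintro ⟨a, _, c, dd⟩; exact ⟨a, by omega, c, dd⟩
      rw [hiff]
      show (w.IsCol i → f i ∈ G.anOf C) ∧ (¬ w.IsCol i → f i ∉ C)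
      rw [hfm i (by omega)]
      exact hopen i hi0 (hndef ▸ hIn)
    · -- the junction vertex
      have hieq : i = n := by omega
      have e1 : f (i - 1) = w.vert (n - 1) := by rw [hfm (i - 1) (by omega), hieq]
      have e2 : f i = v := by rw [hfm i (by omega), hieq, hlast]
      have e3 : f (i + 1) = u := by rw [hieq]; exact hftop
      constructor
      · intro hcol
        obtain ⟨_, _, hL0, hR0⟩ := hcol
        have hL : G.Edge (w.vert (n - 1)) v := by
          have : G.Edge (f (i - 1)) (f i) := hL0
          rwa [e1, e2] at this
        have hR : G.Edge u v := by
          have : G.Edge (f (i + 1)) (f i) := hR0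
          rwa [e3, e2] at this
        show f i ∈ G.anOf C
        rw [e2]
        cases hd' : d' with
        | true =>
          exfalso
          rw [hd'] at hnew
          exact no_two_cycle hG (by simpa using hnew) hR
        | false =>
          cases hd : d with
          | true =>
            rw [hd, hd'] at hjunc
            simpa using hjunc
          | false =>
            exfalso
            rw [hd] at hle
            exact no_two_cycle hG hL (by simpa using hle)
      · intro hncol
        show f i ∉ C
        rw [e2]
        rcases hvnotC with hv | ⟨hd, hd'⟩
        · exact hv
        · exfalso
          apply hncol
          refine ⟨by omega, by omega, ?_, ?_⟩
          · show G.Edge (f (i - 1)) (f i)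
            rw [e1, e2]
            rw [hd] at hle
            simpa using hle
          · show G.Edge (f (i + 1)) (f i)
            rw [e3, e2]
            rw [hd'] at hnew
            simpa using hnew
  · show (if d' = true then G.Edge (f (n + 1 - 1)) u else G.Edge u (f (n + 1 - 1)))
    rw [show n + 1 - 1 = n from rfl, hfm n (le_refl n), hlast]
    exact hnew

lemma snoc_child (hG : G.Acyclic) {s v u : V} {d : Bool} (h : UW G C s v d)
    (hvC : v ∉ C) (he : G.Edge v u) : UW G C s u true :=
  h.snoc hG true (by simpa using he) (by simp [hvC])

lemma snoc_parent_open (hG : G.Acyclic) {s v u : V} (h : UW G C s v true)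
    (hv : v ∈ G.anOf C) (he : G.Edge u v) : UW G C s u false :=
  h.snoc hG false (by simpa using he) (by simp [hv])

lemma snoc_parent_nc (hG : G.Acyclic) {s v u : V} (h : UW G C s v false)
    (hvC : v ∉ C) (he : G.Edge u v) : UW G C s u false :=
  h.snoc hG false (by simpa using he) (by simp [hvC])

end UW

end Causal.Digraph
namespace Causal.Digraph

variable {V : Type} {G : Digraph V} {C : Set V}

lemma mem_anOf {S : Set V} {u : V} : u ∈ G.anOf S ↔ ∃ t ∈ S, G.anc u t := by
  unfold anOf anSet
  simp [Set.mem_iUnion]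

lemma subset_anOf (S : Set V) : S ⊆ G.anOf S :=
  fun u hu => mem_anOf.mpr ⟨u, hu, Relation.ReflTransGen.refl⟩

lemma anOf_closed {S : Set V} {u w : V} (h : G.anc u w) (hw : w ∈ G.anOf S) :
    u ∈ G.anOf S := by
  obtain ⟨t, ht, hwt⟩ := mem_anOf.mp hw
  exact mem_anOf.mpr ⟨t, ht, h.trans hwt⟩

lemma splice (hG : G.Acyclic) (w : G.GWalk) (hOp : w.Open C) {i j : ℕ}
    (hij : i < j) (hjn : j ≤ w.n) (heq : w.vert i = w.vert j) :
    ∃ w' : G.GWalk, w'.n = w.n - (j - i) ∧ w'.vert 0 = w.vert 0 ∧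
      w'.vert w'.n = w.vert w.n ∧ w'.Open C := by
  set n := w.n with hndef
  clear_value n
  have hadjw : ∀ k, k < n →
      G.Edge (w.vert k) (w.vert (k + 1)) ∨ G.Edge (w.vert (k + 1)) (w.vert k) :=
    fun k hk => w.adj k (hndef ▸ hk)
  have hColw : ∀ k, 0 < k → k < n → (w.IsCol k ↔
      (G.Edge (w.vert (k - 1)) (w.vert k) ∧ G.Edge (w.vert (k + 1)) (w.vert k))) := by
    intro k h1 h2
    unfold GWalk.IsCol
    constructor
    · rintro ⟨_, _, a, b⟩; exact ⟨a, b⟩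
    · rintro ⟨a, b⟩; exact ⟨h1, hndef ▸ h2, a, b⟩
  have hOpw : ∀ k, 0 < k → k < n →
      ((G.Edge (w.vert (k - 1)) (w.vert k) ∧ G.Edge (w.vert (k + 1)) (w.vert k)) →
        w.vert k ∈ G.anOf C) ∧
      (¬ (G.Edge (w.vert (k - 1)) (w.vert k) ∧ G.Edge (w.vert (k + 1)) (w.vert k)) →
        w.vert k ∉ C) := by
    intro k h1 h2
    have h := hOp k h1 (hndef ▸ h2)
    exact ⟨fun hc => h.1 ((hColw k h1 h2).mpr hc), fun hc => h.2 (fun hc' => hc ((hColw k h1 h2).mp hc'))⟩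
  set δ := j - i with hδ
  set m := n - δ with hm
  set g : ℕ → V := fun k => if k ≤ i then w.vert k else w.vert (k + δ) with hg
  have hg1 : ∀ k, k ≤ i → g k = w.vert k := fun k hk => by simp [hg, hk]
  have hg2 : ∀ k, i ≤ k → g k = w.vert (k + δ) := by
    intro k hk
    by_cases hk' : k ≤ i
    · have hki : k = i := le_antisymm hk' hk
      subst hki
      have hkj : k + δ = j := by omega
      rw [hg1 k (le_refl k), hkj, heq]
    · simp [hg, hk']
  have hadjg : ∀ k, k < m → G.Edge (g k) (g (k + 1)) ∨ G.Edge (g (k + 1)) (g k) := by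
    intro k hk
    by_cases hki : k < i
    · rw [hg1 k (by omega), hg1 (k + 1) (by omega)]
      exact hadjw k (by omega)
    · rw [hg2 k (by omega), hg2 (k + 1) (by omega)]
      have : k + 1 + δ = (k + δ) + 1 := by omega
      rw [this]
      exact hadjw (k + δ) (by omega)
  refine ⟨⟨m, g, hadjg⟩, rfl, ?_, ?_, ?_⟩
  · show g 0 = w.vert 0
    exact hg1 0 (by omega)
  · show g m = w.vert n
    rcases Nat.lt_or_ge m i with h | h
    · -- m < i impossible? m ≥ i: m = n - (j-i) ≥ i since j ≤ n
      omega
    · rw [hg2 m h]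
      congr 1
      omega
  · -- openness of the spliced walk
    intro k hk0 hkm
    have hkm' : k < m := hkm
    have hColg : ∀ kk, 0 < kk → kk < m → (GWalk.IsCol ⟨m, g, hadjg⟩ kk ↔
        (G.Edge (g (kk - 1)) (g kk) ∧ G.Edge (g (kk + 1)) (g kk))) := by
      intro kk h1 h2
      unfold GWalk.IsCol
      constructor
      · rintro ⟨_, _, a, b⟩; exact ⟨a, b⟩
      · rintro ⟨a, b⟩; exact ⟨h1, h2, a, b⟩
    rcases Nat.lt_trichotomy k i with hki | hki | hki
    · -- before the junction
      have e1 : g (k - 1) = w.vert (k - 1) := hg1 _ (by omega)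
      have e2 : g k = w.vert k := hg1 _ (by omega)
      have e3 : g (k + 1) = w.vert (k + 1) := hg1 _ (by omega)
      have h := hOpw k hk0 (by omega)
      constructor
      · intro hc
        have hc' := (hColg k hk0 hkm').mp hc
        rw [e1, e2, e3] at hc'
        show g k ∈ G.anOf C
        rw [e2]
        exact h.1 hc'
      · intro hc
        show g k ∉ C
        rw [e2]
        refine h.2 (fun hc' => hc ((hColg k hk0 hkm').mpr ?_))
        rw [e1, e2, e3]
        exact hc'
    · -- the junction k = i
      subst hki
      have e1 : g (k - 1) = w.vert (k - 1) := hg1 _ (by omega)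
      have e2 : g k = w.vert k := hg1 _ (le_refl k)
      have e3 : g (k + 1) = w.vert (j + 1) := by
        rw [hg2 (k + 1) (by omega)]
        congr 1
        omega
      have hjlt : j < n := by omega
      have hj0 : 0 < j := by omega
      by_cases hv0 : w.vert k ∈ C
      · -- junction must be a collider on both old occurrences
        have hcoli : G.Edge (w.vert (k - 1)) (w.vert k) ∧ G.Edge (w.vert (k + 1)) (w.vert k) := by
          by_contra hc
          exact (hOpw k hk0 (by omega)).2 hc hv0
        have hcolj : G.Edge (w.vert (j - 1)) (w.vert j) ∧ G.Edge (w.vert (j + 1)) (w.vert j) := by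
          by_contra hc
          exact (hOpw j hj0 hjlt).2 hc (heq ▸ hv0)
        have hgcol : GWalk.IsCol ⟨m, g, hadjg⟩ k := by
          refine (hColg k hk0 hkm').mpr ?_
          rw [e1, e2, e3]
          exact ⟨hcoli.1, heq ▸ hcolj.2⟩
        constructor
        · intro _
          show g k ∈ G.anOf C
          rw [e2]
          exact subset_anOf C hv0
        · intro hc
          exact absurd hgcol hc
      · constructor
        · -- junction collider: show ancestor of C
          intro hc
          have hc' := (hColg k hk0 hkm').mp hc
          rw [e1, e2, e3] at hc'
          obtain ⟨hL, hR⟩ := hc'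
          show g k ∈ G.anOf C
          rw [e2]
          by_cases hci : G.Edge (w.vert (k - 1)) (w.vert k) ∧ G.Edge (w.vert (k + 1)) (w.vert k)
          · exact (hOpw k hk0 (by omega)).1 hci
          · have hE1 : G.Edge (w.vert k) (w.vert (k + 1)) := by
              rcases hadjw k (by omega) with h | h
              · exact h
              · exact absurd ⟨hL, h⟩ hci
            by_cases hcj : G.Edge (w.vert (j - 1)) (w.vert j) ∧ G.Edge (w.vert (j + 1)) (w.vert j)
            · rw [heq]
              exact (hOpw j hj0 hjlt).1 hcj
            · have hRj : G.Edge (w.vert (j + 1)) (w.vert j) := heq ▸ hR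
              have hE2 : ¬ G.Edge (w.vert (j - 1)) (w.vert j) := fun h => hcj ⟨h, hRj⟩
              -- find the first direction flip in the loop
              have hKex : ∃ kk, k ≤ kk ∧ kk < j ∧ ¬ G.Edge (w.vert kk) (w.vert (kk + 1)) := by
                refine ⟨j - 1, by omega, by omega, ?_⟩
                have hj1 : j - 1 + 1 = j := by omega
                rw [hj1]
                exact hE2
              classical
              obtain ⟨hk0i, hk0j, hk0E⟩ := Nat.find_spec hKex
              have hik0 : k < Nat.find hKex := by
                rcases Nat.lt_or_ge k (Nat.find hKex) with h | h
                · exact h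
                · have hkk : Nat.find hKex = k := le_antisymm h hk0i
                  rw [hkk] at hk0E
                  exact absurd hE1 hk0E
              have hchain : ∀ kk, k ≤ kk → kk < Nat.find hKex →
                  G.Edge (w.vert kk) (w.vert (kk + 1)) := by
                intro kk h1 h2
                by_contra hc'
                exact Nat.find_min hKex h2 ⟨h1, by omega, hc'⟩
              have hanc : ∀ kk, k ≤ kk → kk ≤ Nat.find hKex →
                  G.anc (w.vert k) (w.vert kk) := by
                intro kk h1
                induction kk, h1 using Nat.le_induction with
                | base => exact fun _ => Relation.ReflTransGen.refl
                | succ mm hmm ih =>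
                  intro h2
                  exact Relation.ReflTransGen.tail (ih (by omega)) (hchain mm hmm (by omega))
              have hcolk0 : G.Edge (w.vert (Nat.find hKex - 1)) (w.vert (Nat.find hKex)) ∧
                  G.Edge (w.vert (Nat.find hKex + 1)) (w.vert (Nat.find hKex)) := by
                constructor
                · have := hchain (Nat.find hKex - 1) (by omega) (by omega)
                  have hk01 : Nat.find hKex - 1 + 1 = Nat.find hKex := by omega
                  rwa [hk01] at this
                · rcases hadjw (Nat.find hKex) (by omega) with h | h
                  · exact absurd h hk0E
                  · exact h
              have hk0an : w.vert (Nat.find hKex) ∈ G.anOf C :=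
                (hOpw (Nat.find hKex) (by omega) (by omega)).1 hcolk0
              exact anOf_closed (hanc (Nat.find hKex) (by omega) (by omega)) hk0an
        · intro _
          show g k ∉ C
          rw [e2]
          exact hv0
    · -- after the junction
      have e1 : g (k - 1) = w.vert (k - 1 + δ) := hg2 _ (by omega)
      have e2 : g k = w.vert (k + δ) := hg2 _ (by omega)
      have e3 : g (k + 1) = w.vert (k + 1 + δ) := hg2 _ (by omega)
      have e1' : k - 1 + δ = k + δ - 1 := by omega
      have e3' : k + 1 + δ = k + δ + 1 := by omega
      rw [e1'] at e1
      rw [e3'] at e3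
      have h := hOpw (k + δ) (by omega) (by omega)
      constructor
      · intro hc
        have hc' := (hColg k hk0 hkm').mp hc
        rw [e1, e2, e3] at hc'
        show g k ∈ G.anOf C
        rw [e2]
        exact h.1 hc'
      · intro hc
        show g k ∉ C
        rw [e2]
        refine h.2 (fun hc' => hc ((hColg k hk0 hkm').mpr ?_))
        rw [e1, e2, e3]
        exact hc'

/-- From an open walk between distinct vertices, extract an open (unblocked) path. -/
lemma exists_open_path (hG : G.Acyclic) {s t : V} (hst : s ≠ t)
    (h : ∃ w : G.GWalk, 1 ≤ w.n ∧ w.vert 0 = s ∧ w.vert w.n = t ∧ w.Open C) :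
    ∃ p : G.GPath, 1 ≤ p.n ∧ p.first = s ∧ p.last = t ∧ ¬ p.Blocked C := by
  classical
  have hQ : ∃ nn : ℕ, ∃ w : G.GWalk, w.n = nn ∧ 1 ≤ w.n ∧ w.vert 0 = s ∧ w.vert w.n = t ∧
      w.Open C := by
    obtain ⟨w, h1, h2, h3, h4⟩ := h
    exact ⟨w.n, w, rfl, h1, h2, h3, h4⟩
  let k := Nat.find hQ
  obtain ⟨w, hwn, hn1, h0, hlast, hOp⟩ := Nat.find_spec hQ
  have hinj : ∀ a b, a ≤ w.n → b ≤ w.n → w.vert a = w.vert b → a = b := by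
    by_contra hc
    push_neg at hc
    obtain ⟨a, b, ha, hb, heq, hab⟩ := hc
    -- wlog a < b
    have key : ∀ a b, a < b → b ≤ w.n → w.vert a = w.vert b → False := by
      intro a b hab' hb' heq'
      obtain ⟨w', hw'n, hw'0, hw'l, hw'Op⟩ := splice hG w hOp hab' hb' heq'
      have hw'1 : 1 ≤ w'.n := by
        rcases Nat.eq_zero_or_pos w'.n with h0' | h' 
        · exfalso
          apply hst
          rw [← h0, ← hlast, ← hw'0, ← hw'l, h0']
        · exact h'
      have hkle : k ≤ w'.n :=
        Nat.find_min' hQ ⟨w', rfl, hw'1, hw'0.trans h0, hw'l.trans hlast, hw'Op⟩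
      have hlt : w'.n < k := by
        rw [hw'n]
        omega
      omega
    rcases Nat.lt_or_ge a b with h' | h'
    · exact key a b h' hb heq
    · exact key b a (by omega) ha heq.symm
  refine ⟨⟨w.n, w.vert, hinj, w.adj⟩, hn1, h0, hlast, ?_⟩
  rintro (⟨i, h1, h2, hnc, hmem⟩ | ⟨i, hcol, hmem⟩)
  · exact (hOp i h1 h2).2 (fun hc => hnc hc) hmem
  · obtain ⟨a, b, c, d⟩ := hcol
    exact hmem ((hOp i a b).1 ⟨a, b, c, d⟩)

end Causal.Digraph
namespace Causal.Digraph

variable {V : Type} {G : Digraph V}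

/-- One step in the moral graph of the ancestral closure of `S ∪ T ∪ C`, landing
outside `C`. -/
def mstep (G : Digraph V) (S T C : Set V) (u v : V) : Prop :=
  u ∈ G.anOf (S ∪ T ∪ C) ∧ v ∈ G.anOf (S ∪ T ∪ C) ∧ v ∉ C ∧
    (G.Edge u v ∨ G.Edge v u ∨ ∃ z ∈ G.anOf (S ∪ T ∪ C), G.Edge u z ∧ G.Edge v z)

/-- Vertices moral-connected to `S \ C` avoiding `C`. -/
def Astar (G : Digraph V) (S T C : Set V) : Set V :=
  {u | ∃ s ∈ S \ C, Relation.ReflTransGen (G.mstep S T C) s u}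

lemma dsep_no_UW {S T C : Set V} (hG : G.Acyclic) (hd : G.dsep S T C) {s t : V}
    (hs : s ∈ S \ C) (ht : t ∈ T \ C) (hst : s ≠ t) (d : Bool) : ¬ UW G C s t d := by
  rintro ⟨w, hn, h0, hl, hOp, _⟩
  obtain ⟨p, hp1, hpf, hpl, hpnb⟩ := exists_open_path hG hst ⟨w, hn, h0, hl, hOp⟩
  exact hpnb (hd s hs t ht p hp1 hpf hpl)

lemma anc_cfree {C : Set V} {y e : V} (h : G.anc y e) (hy : y ∉ G.anOf C) :
    Relation.ReflTransGen (fun a b => G.Edge a b ∧ b ∉ C) y e := by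
  induction h with
  | refl => exact Relation.ReflTransGen.refl
  | tail hyb hbe ih =>
    refine Relation.ReflTransGen.tail ih ⟨hbe, fun heC => ?_⟩
    exact hy (anOf_closed (Relation.ReflTransGen.tail ‹_› hbe) (subset_anOf C heC))

lemma exit_target {S T C : Set V} {y : V} (hyAn : y ∈ G.anOf (S ∪ T ∪ C))
    (hyC : y ∉ G.anOf C) :
    ∃ e, (e ∈ S ∨ e ∈ T) ∧ G.anc y e ∧ e ∉ C := by
  obtain ⟨t, ht, hyt⟩ := mem_anOf.mp hyAn
  rcases ht with hST | hC
  · exact ⟨t, Set.mem_union _ _ _ |>.mp hST, hyt,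
      fun htC => hyC (mem_anOf.mpr ⟨t, htC, hyt⟩)⟩
  · exact absurd (mem_anOf.mpr ⟨t, hC, hyt⟩) hyC

lemma UW.descend {C : Set V} (hG : G.Acyclic) {s v e : V} {d : Bool}
    (h : UW G C s v d) (hv : v ∉ C)
    (hp : Relation.ReflTransGen (fun a b => G.Edge a b ∧ b ∉ C) v e) :
    e = v ∨ UW G C s e true := by
  induction hp with
  | refl => exact Or.inl rfl
  | @tail b c hvb hbc ih =>
    have hbC : b ∉ C := by
      rcases Relation.ReflTransGen.cases_tail hvb with rfl | ⟨cc, _, hcb⟩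
      · exact hv
      · exact hcb.2
    rcases ih with rfl | hUW
    · exact Or.inr (h.snoc_child hG hv hbc.1)
    · exact Or.inr (hUW.snoc_child hG hbC hbc.1)

lemma ascend {C : Set V} (hG : G.Acyclic) {z e : V}
    (hp : Relation.ReflTransGen (fun a b => G.Edge a b ∧ b ∉ C) z e) :
    z = e ∨ UW G C e z false := by
  induction hp using Relation.ReflTransGen.head_induction_on with
  | refl => exact Or.inl rfl
  | @head a b hab hbe ih =>
    rcases ih with rfl | hUW
    · exact Or.inr (UW.base false (by simpa using hab.1))
    · exact Or.inr (hUW.snoc_parent_nc hG hab.2 hab.1)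

lemma exitUp {S T C : Set V} (hG : G.Acyclic) (hd : G.dsep S T C)
    (hdisj : ∀ x, x ∈ S \ C → x ∈ T \ C → False)
    {s' y p : V} (hs' : s' ∈ S \ C) (hyAn : y ∈ G.anOf (S ∪ T ∪ C))
    (hUW : UW G C s' y true) (hep : G.Edge p y) :
    ∃ s'' ∈ S \ C, UW G C s'' p false := by
  by_cases hyanC : y ∈ G.anOf C
  · exact ⟨s', hs', hUW.snoc_parent_open hG hyanC hep⟩
  · have hyC : y ∉ C := fun h => hyanC (subset_anOf C h)
    obtain ⟨e, heST, hance, heC⟩ := exit_target hyAn hyanC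
    have hcf := anc_cfree hance hyanC
    rcases heST with heS | heT
    · -- the rescue endpoint is in S : restart from it
      rcases UW.descend hG hUW hyC hcf with rfl | hUWe
      · exact ⟨e, ⟨heS, heC⟩, UW.base false (by simpa using hep)⟩
      · rcases ascend hG hcf with rfl | hclimb
        · exact ⟨y, ⟨heS, heC⟩, UW.base false (by simpa using hep)⟩
        · exact ⟨e, ⟨heS, heC⟩, hclimb.snoc_parent_nc hG hyC hep⟩
    · -- the rescue endpoint is in T : contradiction with d-separation
      exfalso
      have htC : e ∈ T \ C := ⟨heT, heC⟩
      have hs'e : s' ≠ e := fun h => hdisj s' hs' (h ▸ htC)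
      rcases UW.descend hG hUW hyC hcf with rfl | hUWe
      · exact dsep_no_UW hG hd hs' htC hs'e true hUW
      · exact dsep_no_UW hG hd hs' htC hs'e true hUWe

/-- Main lemma: under d-separation, no vertex of `T \ C` is moral-connected to `S \ C`. -/
theorem astar_not_T {S T C : Set V} (hG : G.Acyclic) (hd : G.dsep S T C)
    (hdisj : ∀ x, x ∈ S \ C → x ∈ T \ C → False) :
    ∀ u, u ∈ G.Astar S T C → u ∈ T \ C → False := by
  intro u hu huT
  obtain ⟨s, hs, hrtg⟩ := hu
  have hP : ∃ s' ∈ S \ C, s' = u ∨ ∃ d, UW G C s' u d := by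
    clear huT
    induction hrtg with
    | refl => exact ⟨s, hs, Or.inl rfl⟩
    | @tail u₀ w hru hstep ih =>
      obtain ⟨s', hs', hcase⟩ := ih
      have hu₀C : u₀ ∉ C := by
        rcases Relation.ReflTransGen.cases_tail hru with rfl | ⟨c, _, hc⟩
        · exact hs.2
        · exact hc.2.2.1
      obtain ⟨hu₀An, hwAn, hwC, hedges⟩ := hstep
      rcases hedges with he | he | ⟨z, hzAn, hez1, hez2⟩
      · rcases hcase with rfl | ⟨d, hUW⟩
        · exact ⟨s', hs', Or.inr ⟨true, UW.base true (by simpa using he)⟩⟩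
        · exact ⟨s', hs', Or.inr ⟨true, hUW.snoc_child hG hu₀C he⟩⟩
      · rcases hcase with rfl | ⟨d, hUW⟩
        · exact ⟨s', hs', Or.inr ⟨false, UW.base false (by simpa using he)⟩⟩
        · cases d with
          | false => exact ⟨s', hs', Or.inr ⟨false, hUW.snoc_parent_nc hG hu₀C he⟩⟩
          | true =>
            obtain ⟨s'', hs'', h⟩ := exitUp hG hd hdisj hs' hu₀An hUW he
            exact ⟨s'', hs'', Or.inr ⟨false, h⟩⟩
      · have hUWz : UW G C s' z true := by
          rcases hcase with rfl | ⟨d, hUW⟩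
          · exact UW.base true (by simpa using hez1)
          · exact hUW.snoc_child hG hu₀C hez1
        obtain ⟨s'', hs'', h⟩ := exitUp hG hd hdisj hs' hzAn hUWz hez2
        exact ⟨s'', hs'', Or.inr ⟨false, h⟩⟩
  obtain ⟨s', hs', hcase⟩ := hP
  rcases hcase with rfl | ⟨d, hUW⟩
  · exact hdisj s' hs' huT
  · exact dsep_no_UW hG hd hs' huT (fun h => hdisj s' hs' (h ▸ huT)) d hUW

end Causal.Digraph
namespace Causal

open Causal.Digraph

variable {V : Type} [Fintype V] [DecidableEq V] {X : V → Finset ℝ} {G : Digraph V}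
  {P : Config X → ℝ}

/-- Global Markov property, packaged: if `S` is d-separated from `T` given `C` and `f`
depends only on the coordinates in `T ∪ C`, then conditioning on `S` as well as `C`
is the same as conditioning on `C` only. -/
theorem gm_drop (hG : G.Acyclic) (hpos : StrictPos X P) (hM : MarkovPMF G X P)
    (x₀ : Config X) {S T C : Set V} (hd : G.dsep S T C)
    (hdisj : ∀ x, x ∈ S \ C → x ∈ T \ C → False)
    {f : Config X → ℝ} (hf : DepOn f (T ∪ C)) (x : Config X) :
    condExp X P f (C ∪ S) x = condExp X P f C x := by
  classical
  set An : Set V := G.anOf (S ∪ T ∪ C) with hAn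
  set As : Set V := G.Astar S T C with hAsd
  set Bs : Set V := An \ (As ∪ C) with hBs
  have hCAn : C ⊆ An := fun u hu => subset_anOf _ (Or.inr hu)
  have hSAn : S ⊆ An := fun u hu => subset_anOf _ (Or.inl (Or.inl hu))
  have hTAn : T ⊆ An := fun u hu => subset_anOf _ (Or.inl (Or.inr hu))
  have hAnClosed : ∀ v ∈ An, ∀ u ∈ G.paSet v, u ∈ An := by
    intro v hv u hu
    exact anOf_closed (Relation.ReflTransGen.single hu) hv
  have hSCAs : S \ C ⊆ As := fun u hu => ⟨u, hu, Relation.ReflTransGen.refl⟩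
  have hAsAn : ∀ u ∈ As, u ∈ An ∧ u ∉ C := by
    rintro u ⟨s, hs, hrtg⟩
    induction hrtg with
    | refl => exact ⟨hSAn hs.1, hs.2⟩
    | tail _ hstep ih => exact ⟨hstep.2.1, hstep.2.2.1⟩
  -- the classification predicate
  set Q : V → Prop := fun v => ∀ w ∈ insert v (G.paSet v), w ∈ As ∪ C with hQ
  have hQ_of_As : ∀ v ∈ As, Q v := by
    intro v hv w hw
    rcases Set.mem_insert_iff.mp hw with rfl | hw
    · exact Or.inl hv
    · by_cases hwC : w ∈ C
      · exact Or.inr hwC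
      · have hvAn := (hAsAn v hv).1
        obtain ⟨s, hs, hrtg⟩ := hv
        refine Or.inl ⟨s, hs, hrtg.tail ?_⟩
        exact ⟨hvAn, hAnClosed v hvAn w hw, hwC, Or.inr (Or.inl hw)⟩
  have hnotQ : ∀ v ∈ An, ¬ Q v → ∀ w ∈ insert v (G.paSet v), w ∈ Bs ∪ C := by
    intro v hvAn hvQ w hw
    have hvAs : v ∉ As := fun h => hvQ (hQ_of_As v h)
    rcases Set.mem_insert_iff.mp hw with rfl | hwpa
    · by_cases hvC : w ∈ C
      · exact Or.inr hvC
      · exact Or.inl ⟨hvAn, fun hc => hc.elim hvAs hvC⟩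
    · by_cases hwC : w ∈ C
      · exact Or.inr hwC
      · have hwAn : w ∈ An := hAnClosed v hvAn w hwpa
        by_cases hvC : v ∈ C
        · -- v ∈ C : if some non-C parent were in As, all would be, giving Q v
          refine Or.inl ⟨hwAn, fun hc => ?_⟩
          rcases hc with hwAs | hwC'
          · -- w ∈ As : show Q v, contradiction
            apply hvQ
            intro w' hw'
            rcases Set.mem_insert_iff.mp hw' with rfl | hw'pa
            · exact Or.inr hvC
            · by_cases hw'C : w' ∈ C
              · exact Or.inr hw'C
              · obtain ⟨s, hs, hrtg⟩ := hwAs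
                refine Or.inl ⟨s, hs, hrtg.tail ?_⟩
                exact ⟨hwAn, hAnClosed v hvAn w' hw'pa, hw'C,
                  Or.inr (Or.inr ⟨v, hvAn, hwpa, hw'pa⟩)⟩
          · exact hwC hwC'
        · -- v ∉ C, v ∉ As : parents outside C cannot be in As either
          refine Or.inl ⟨hwAn, fun hc => ?_⟩
          rcases hc with hwAs | hwC'
          · obtain ⟨s, hs, hrtg⟩ := hwAs
            exact hvAs ⟨s, hs, hrtg.tail ⟨hwAn, hvAn, hvC, Or.inl hwpa⟩⟩
          · exact hwC hwC'
  -- factorization of the ancestral marginal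
  set VA : Finset V :=
    (Finset.univ.filter (fun v => v ∈ An)).filter Q with hVA
  set VB : Finset V :=
    (Finset.univ.filter (fun v => v ∈ An)).filter (fun v => ¬ Q v) with hVB
  set F : Config X → ℝ := fun z => ∏ v ∈ VA, condK G X P v z with hF
  set Gf : Config X → ℝ := fun z => ∏ v ∈ VB, condK G X P v z with hGf
  have hfact : ∀ z, margOn X P An z = F z * Gf z := by
    intro z
    rw [margOn_ancestral hG hpos hM hAnClosed z]
    simp only [hF, hGf, hVA, hVB]
    exact (Finset.prod_filter_mul_prod_filter_not
      (Finset.univ.filter (fun v => v ∈ An)) Q (condK G X P · z)).symm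
  have hFdep : DepOn F (An \ Bs) := by
    intro y x' hyx'
    refine Finset.prod_congr rfl fun v hv => ?_
    simp only [hVA, Finset.mem_filter, Finset.mem_univ, true_and] at hv
    obtain ⟨hvAn, hvQ⟩ := hv
    refine condK_depOn v (hyx'.mono ?_)
    intro w hw
    have hwAsC : w ∈ As ∪ C := hvQ w hw
    have hwAn : w ∈ An := by
      rcases Set.mem_insert_iff.mp hw with rfl | hwpa
      · exact hvAn
      · exact hAnClosed v hvAn w hwpa
    exact ⟨hwAn, fun hc => hc.2 hwAsC⟩
  have hGdep : DepOn Gf (Bs ∪ C) := by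
    intro y x' hyx'
    refine Finset.prod_congr rfl fun v hv => ?_
    simp only [hVB, Finset.mem_filter, Finset.mem_univ, true_and] at hv
    obtain ⟨hvAn, hvQ⟩ := hv
    exact condK_depOn v (hyx'.mono (hnotQ v hvAn hvQ))
  have hTBs : T \ C ⊆ Bs := by
    intro t ht
    refine ⟨hTAn ht.1, fun hc => ?_⟩
    rcases hc with hAs' | hC'
    · exact astar_not_T hG hd hdisj t hAs' ht
    · exact ht.2 hC'
  have hfdep : DepOn f (Bs ∪ C) := by
    refine hf.mono ?_
    intro w hw
    rcases hw with hT | hC'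
    · by_cases hwC : w ∈ C
      · exact Or.inr hwC
      · exact Or.inl (hTBs ⟨hT, hwC⟩)
    · exact Or.inr hC'
  have hsetEq : C ∪ S = C ∪ (S \ C) := by
    ext u
    simp only [Set.mem_union, Set.mem_diff]
    tauto
  rw [hsetEq]
  refine condExp_drop hpos x₀ (Set.diff_subset) hCAn
    (fun u hu => hSAn hu.1) ?_ ?_ ?_ hfact hFdep hGdep hfdep x
  · rw [Set.disjoint_right]
    exact fun u hu => fun hc => hu.2 (Or.inr hc)
  · rw [Set.disjoint_right]
    intro u hu
    exact fun hc => hu.2 (Or.inl (hSCAs hc))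
  · rw [Set.disjoint_right]
    exact fun u hu => fun hc => hc.2 hu

end Causal
namespace Causal

open Causal.Digraph

variable {V : Type} [Fintype V] [DecidableEq V] {X : V → Finset ℝ} {G : Digraph V}
  {P : Config X → ℝ}

lemma acyclic_no_anc_cycle (hG : G.Acyclic) {u v : V} (h1 : G.Edge u v) (h2 : G.anc v u) :
    False :=
  hG u (Relation.TransGen.head' h1 h2)

lemma Omin_subset_Oset (A Y : V) : G.Omin A Y ⊆ G.Oset A Y := by
  intro x hx
  refine hx (G.Oset A Y) ⟨subset_rfl, ?_⟩
  intro s hs t ht p hp1 hpf hpl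
  exact absurd ht.1.1 (fun h => ht.1.2 h)

lemma Oset_not_Mset {A Y x : V} (hx : x ∈ G.Oset A Y) : x ∉ G.Mset A Y := fun h => hx.2 (Or.inl h)

lemma A_not_Mset {A Y : V} : A ∉ G.Mset A Y := fun h => h.1 rfl

/-- A length-one path between distinct vertices. -/
lemma not_blocked_one (hG : G.Acyclic) {u v : V} (huv : u ≠ v)
    (hadj : G.Edge u v ∨ G.Edge v u) (C : Set V) :
    ∃ p : G.GPath, 1 ≤ p.n ∧ p.first = u ∧ p.last = v ∧ ¬ p.Blocked C := by
  have hinj : ∀ i j, i ≤ 1 → j ≤ 1 → (if i = 0 then u else v) = (if j = 0 then u else v) →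
      i = j := by
    intro i j hi hj hv
    interval_cases i <;> interval_cases j <;> simp_all
  have hadj' : ∀ i, i < 1 → G.Edge ((if i = 0 then u else v))
      ((if i + 1 = 0 then u else v)) ∨
      G.Edge ((if i + 1 = 0 then u else v)) ((if i = 0 then u else v)) := by
    intro i hi
    have : i = 0 := by omega
    subst this
    simpa using hadj
  refine ⟨⟨1, fun i => if i = 0 then u else v, hinj, hadj'⟩, le_refl 1, by simp [GPath.first],
    by simp [GPath.last], ?_⟩
  rintro (⟨i, h1, h2, _, _⟩ | ⟨i, ⟨h1, h2, _⟩, _⟩) <;>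
    · have : i < 1 := h2
      omega

end Causal
namespace Causal

open Causal.Digraph

variable {V : Type} [Fintype V] [DecidableEq V] {X : V → Finset ℝ} {G : Digraph V}
  {P : Config X → ℝ}

lemma two_path (hG : G.Acyclic) {u m w : V} (hum : u ≠ m) (huw : u ≠ w) (hmw : m ≠ w)
    (h1 : G.Edge u m) (h2 : G.Edge w m) {C : Set V} (hman : m ∈ G.anOf C) :
    ∃ p : G.GPath, 1 ≤ p.n ∧ p.first = u ∧ p.last = w ∧ ¬ p.Blocked C := by
  set f : ℕ → V := fun i => if i = 0 then u else if i = 1 then m else w with hf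
  have hinj : ∀ i j, i ≤ 2 → j ≤ 2 → f i = f j → i = j := by
    intro i j hi hj hv
    simp only [hf] at hv
    interval_cases i <;> interval_cases j <;> simp_all
  have hadj : ∀ i, i < 2 → G.Edge (f i) (f (i + 1)) ∨ G.Edge (f (i + 1)) (f i) := by
    intro i hi
    interval_cases i
    · exact Or.inl (by simp [hf]; exact h1)
    · exact Or.inr (by simp [hf]; exact h2)
  have hcol : GPath.IsCollider ⟨2, f, hinj, hadj⟩ 1 := by
    refine ⟨one_pos, one_lt_two, ?_, ?_⟩
    · show G.Edge (f 0) (f 1)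
      simpa [hf] using h1
    · show G.Edge (f 2) (f 1)
      simpa [hf] using h2
  refine ⟨⟨2, f, hinj, hadj⟩, one_le_two, by simp [GPath.first, hf], ?_, ?_⟩
  · show f 2 = w
    simp [hf]
  · rintro (⟨i, hi1, hi2, hnc, _⟩ | ⟨i, hic, hnm⟩)
    · have hi2' : i < 2 := hi2
      have : i = 1 := by omega
      subst this
      exact hnc hcol
    · obtain ⟨ha, hb, _, _⟩ := hic
      have hb' : i < 2 := hb
      have : i = 1 := by omega
      subst this
      refine hnm ?_
      show f 1 ∈ G.anOf C
      simpa [hf] using hman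

end Causal

open Causal Causal.Digraph in
theorem statement_10' {V : Type} [Fintype V] [DecidableEq V]
    (G : Causal.Digraph V) (A Y : V) (hG : G.Acyclic) (hAY : A ≠ Y) (hA : G.anc A Y)
    (X : V → Finset ℝ) (hX : ∀ v, 2 ≤ (X v).card)
    (P : Config X → ℝ) (hP : IsPMF X P) (hpos : StrictPos X P) (hM : MarkovPMF G X P)
    (a : ℝ) (ha : a ∈ X A)
    (Mi : V) (hMi : Mi ∈ G.Mset A Y) (hMiY : Mi ≠ Y) (hcrit : G.MCrit A Y Mi)
    (l : List V) (hl : G.IsTopoOrd (G.chSet Mi ∩ G.Mset A Y) l) (hlne : l ≠ []) :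
    (∀ x : Config X,
      condExp X P (Tvar G X P A Y a) (insert Mi (G.paSet Mi)) x +
        ∑ t ∈ Finset.range l.length,
          (condExp X P (Tvar G X P A Y a) (insert (l.getD t Mi) (G.paSet (l.getD t Mi))) x -
            condExp X P (Tvar G X P A Y a) (G.paSet (l.getD t Mi)) x) =
      condExp X P (Tvar G X P A Y a)
        (insert (l.getD (l.length - 1) Mi) (G.paSet (l.getD (l.length - 1) Mi)) \ {Mi}) x) := by
  classical
  obtain ⟨_, hdsepI, hstep⟩ := hcrit l hl
  set k := l.length with hk
  have hk1 : 1 ≤ k := by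
    rw [hk]
    exact List.length_pos_iff.mpr hlne
  set c : ℕ → V := chainD Mi l with hc
  have hc0 : c 0 = Mi := rfl
  have hgetD : ∀ t, c (t + 1) = l.getD t Mi := by
    intro t
    simp [hc, chainD]
  -- basic chain facts
  have hcmem : ∀ s, 1 ≤ s → s ≤ k → c s ∈ G.chSet Mi ∩ G.Mset A Y := by
    intro s h1 h2
    have hs1 : s - 1 < l.length := by omega
    have hcs : c s = l.getD (s - 1) Mi := by
      have h := hgetD (s - 1)
      rwa [show s - 1 + 1 = s by omega] at h
    rw [hcs, List.getD_eq_getElem l Mi hs1]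
    exact (hl.2.1 _).mp (List.getElem_mem hs1)
  have hEdge : ∀ t, t < k → G.Edge (c t) (c (t + 1)) := fun t ht => (hstep t ht).1
  have hpaSub : ∀ t, t < k →
      G.paSet (c (t + 1)) ⊆ insert (c t) (G.paSet (c t)) := fun t ht => (hstep t ht).2.1
  have hancTo : ∀ s t, s ≤ t → t ≤ k → G.anc (c s) (c t) := by
    intro s t hst htk
    induction t with
    | zero =>
      have : s = 0 := by omega
      subst this
      exact Relation.ReflTransGen.refl
    | succ m ih =>
      rcases Nat.lt_or_ge s (m + 1) with h | h
      · exact (ih (by omega) (by omega)).tail (hEdge m (by omega))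
      · have : s = m + 1 := by omega
        subst this
        exact Relation.ReflTransGen.refl
  have hcne : ∀ s, 1 ≤ s → s ≤ k → c s ≠ Mi := by
    intro s h1 h2 heq
    have := (hcmem s h1 h2).1
    rw [heq] at this
    exact no_self_edge hG Mi this
  have hcMset : ∀ s, 1 ≤ s → s ≤ k → c s ∈ G.Mset A Y := fun s h1 h2 => (hcmem s h1 h2).2
  -- D, the set T depends on
  set D : Set V := insert A (insert Y (G.Omin A Y)) with hD
  have hMiD : Mi ∉ D := by
    intro h
    rcases h with h | h | h
    · exact hMi.1 h
    · exact hMiY h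
    · exact Oset_not_Mset (Omin_subset_Oset A Y h) hMi
  have hDnotM : ∀ z ∈ D, z ≠ Y → z ∉ G.Mset A Y ∧ z ≠ Mi := by
    intro z hz hzY
    rcases hz with rfl | rfl | h
    · exact ⟨A_not_Mset, fun h => hMi.1 h.symm⟩
    · exact absurd rfl hzY
    · exact ⟨Oset_not_Mset (Omin_subset_Oset A Y h),
        fun he => Oset_not_Mset (Omin_subset_Oset A Y (he ▸ h)) hMi⟩
  have hYpa : ∀ s, s ≤ k → Y ∉ G.paSet (c s) := by
    intro s hs hYp
    have hancY : G.anc (c s) Y := by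
      rcases Nat.eq_zero_or_pos s with rfl | h1
      · exact hMi.2.2
      · exact (hcMset s h1 hs).2.2
    exact hG Y (Relation.TransGen.head' hYp hancY)
  -- Tvar depends only on D
  have hTdep : DepOn (Tvar G X P A Y a) D := by
    intro y x hyx
    unfold Tvar
    have hA' : (y A : ℝ) = x A :=
      congrArg Subtype.val (hyx A (Set.mem_insert _ _))
    have hY' : (y Y : ℝ) = x Y :=
      congrArg Subtype.val (hyx Y (Set.mem_insert_of_mem _ (Set.mem_insert _ _)))
    have hden : condExp X P (fun y => if (y A : ℝ) = a then 1 else 0) (G.Omin A Y) y =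
        condExp X P (fun y => if (y A : ℝ) = a then 1 else 0) (G.Omin A Y) x :=
      condExp_agr (hyx.mono (fun w hw => Set.mem_insert_of_mem _ (Set.mem_insert_of_mem _ hw)))
    rw [hA', hY', hden]
  -- base configuration
  have hne : ∀ v, (X v).Nonempty := fun v => Finset.card_pos.mp (by have := hX v; omega)
  set x0 : Config X := fun v => ⟨(X v).min' (hne v), (X v).min'_mem (hne v)⟩ with hx0
  -- the conditioning set of the M-criterion condition (i)
  set C' : Set V := insert (c k) (G.paSet (c k)) \ {Mi} with hC'
  have hckC' : c k ∈ C' := ⟨Set.mem_insert _ _, hcne k hk1 (le_refl k)⟩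
  have hMiC' : Mi ∉ C' := fun h => h.2 rfl
  -- key structural fact
  have hkey : ∀ t, t < k → ∀ z,
      z ∈ (G.paSet (c t) \ G.paSet (c (t + 1))) \ G.paSet (c (t + 1)) →
      z ∈ D \ G.paSet (c (t + 1)) → False := by
    intro t ht z hz1 hz2
    obtain ⟨⟨hzpa, hznpa⟩, _⟩ := hz1
    obtain ⟨hzD, _⟩ := hz2
    have hzY : z ≠ Y := fun h => hYpa t (by omega) (h ▸ hzpa)
    obtain ⟨hzM, hzMi⟩ := hDnotM z hzD hzY
    -- z cannot be a parent of c k (else monotone descent contradicts z ∉ pa (c (t+1)))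
    have hnotpak : z ∉ G.paSet (c k) := by
      intro hzk
      -- descend: z ∈ paSet (c s) for all t+1 ≤ s ≤ k
      have hdown : ∀ m, ∀ s, s + m = k → t + 1 ≤ s → z ∈ G.paSet (c s) := by
        intro m
        induction m with
        | zero => intro s hs _; rw [show s = k by omega]; exact hzk
        | succ mm ih =>
          intro s hs h1
          have hnext : z ∈ G.paSet (c (s + 1)) := ih (s + 1) (by omega) (by omega)
          have := hpaSub s (by omega) hnext
          rcases Set.mem_insert_iff.mp this with h | h
          · exfalso
            rcases Nat.eq_zero_or_pos s with rfl | hs1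
            · exact hzMi h
            · exact hzM (h ▸ hcMset s hs1 (by omega))
          · exact h
      exact hznpa (hdown (k - (t + 1)) (t + 1) (by omega) (le_refl _))
    have hzC' : z ∉ C' := by
      intro h
      rcases Set.mem_insert_iff.mp h.1 with h' | h'
      · exact hzM (h' ▸ hcMset k hk1 (le_refl k))
      · exact hnotpak h'
    have hzMi' : Mi ≠ z := fun h => hzMi h.symm
    -- now build an unblocked path from Mi to z and contradict (i)
    rcases Nat.eq_zero_or_pos t with rfl | ht1
    · -- t = 0 : direct edge z → Mi
      obtain ⟨p, hp1, hpf, hpl, hpnb⟩ :=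
        not_blocked_one hG hzMi' (Or.inr (show G.Edge z Mi from hzpa)) C'
      exact hpnb (hdsepI Mi ⟨rfl, hMiC'⟩ z ⟨hzD, hzC'⟩ p hp1 hpf hpl)
    · -- t ≥ 1 : path Mi → c t ← z with open collider c t
      have hctMi : Mi ≠ c t := fun h => hcne t ht1 (by omega) h.symm
      have hctz : c t ≠ z := fun h => hzM (h ▸ hcMset t ht1 (by omega))
      have hctan : c t ∈ G.anOf C' :=
        mem_anOf.mpr ⟨c k, hckC', hancTo t k (by omega) (le_refl k)⟩
      obtain ⟨p, hp1, hpf, hpl, hpnb⟩ :=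
        two_path hG hctMi hzMi' hctz ((hcmem t ht1 (by omega)).1)
          (show G.Edge z (c t) from hzpa) hctan
      exact hpnb (hdsepI Mi ⟨rfl, hMiC'⟩ z ⟨hzD, hzC'⟩ p hp1 hpf hpl)
  -- telescoping
  intro x
  set Tv := Tvar G X P A Y a with hTv
  set E : ℕ → ℝ := fun t => condExp X P Tv (insert (c t) (G.paSet (c t))) x with hE
  have hstepEq : ∀ t, t < k →
      condExp X P Tv (G.paSet (c (t + 1))) x = E t := by
    intro t ht
    have hseteq : insert (c t) (G.paSet (c t)) =
        G.paSet (c (t + 1)) ∪ (G.paSet (c t) \ G.paSet (c (t + 1))) := by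
      ext w
      constructor
      · intro hw
        rcases Set.mem_insert_iff.mp hw with rfl | hw
        · exact Or.inl (hEdge t ht)
        · by_cases hw' : w ∈ G.paSet (c (t + 1))
          · exact Or.inl hw'
          · exact Or.inr ⟨hw, hw'⟩
      · intro hw
        rcases hw with hw | hw
        · exact hpaSub t ht hw
        · exact Set.mem_insert_of_mem _ hw.1
    have hdrop := gm_drop hG hpos hM x0 (hstep t ht).2.2 (hkey t ht)
      (hTdep.mono (Set.subset_union_left)) x
    show condExp X P Tv (G.paSet (c (t + 1))) x =
      condExp X P Tv (insert (c t) (G.paSet (c t))) x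
    rw [hseteq, ← hdrop]
  have hsum : ∑ t ∈ Finset.range k,
      (condExp X P Tv (insert (l.getD t Mi) (G.paSet (l.getD t Mi))) x -
        condExp X P Tv (G.paSet (l.getD t Mi)) x) = E k - E 0 := by
    rw [← Finset.sum_range_sub (f := E)]
    refine Finset.sum_congr rfl fun t ht => ?_
    rw [Finset.mem_range] at ht
    rw [← hgetD t, hstepEq t ht]
  have hfinal : E k = condExp X P Tv
      (insert (l.getD (k - 1) Mi) (G.paSet (l.getD (k - 1) Mi)) \ {Mi}) x := by
    have hck : l.getD (k - 1) Mi = c k := by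
      rw [← hgetD (k - 1), show k - 1 + 1 = k by omega]
    rw [hck]
    by_cases hMiSk : Mi ∈ insert (c k) (G.paSet (c k))
    · have hdisj : ∀ z, z ∈ {Mi} \ C' → z ∈ D \ C' → False := by
        rintro z ⟨hz1, _⟩ ⟨hz2, _⟩
        rw [Set.mem_singleton_iff] at hz1
        subst hz1
        exact hMiD hz2
      have hdsep' : G.dsep {Mi} D C' := by
        intro s hs t' ht' p hp1 hpf hpl
        exact hdsepI s hs t' ht' p hp1 hpf hpl
      have hdrop := gm_drop hG hpos hM x0 hdsep' hdisj
        (hTdep.mono (Set.subset_union_left)) x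
      have hseteq : C' ∪ {Mi} = insert (c k) (G.paSet (c k)) := by
        rw [hC']
        ext w
        simp only [Set.mem_union, Set.mem_diff, Set.mem_singleton_iff]
        constructor
        · rintro (⟨h, _⟩ | rfl)
          · exact h
          · exact hMiSk
        · intro h
          by_cases hw : w = Mi
          · exact Or.inr hw
          · exact Or.inl ⟨h, hw⟩
      show condExp X P Tv (insert (c k) (G.paSet (c k))) x =
        condExp X P Tv (insert (c k) (G.paSet (c k)) \ {Mi}) x
      conv_lhs => rw [← hseteq]
      rw [hdrop, hC']
    · have : insert (c k) (G.paSet (c k)) \ {Mi} = insert (c k) (G.paSet (c k)) := by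
        ext w
        simp only [Set.mem_diff, Set.mem_singleton_iff]
        constructor
        · exact fun h => h.1
        · intro h
          exact ⟨h, fun he => hMiSk (he ▸ h)⟩
      show condExp X P Tv (insert (c k) (G.paSet (c k))) x =
        condExp X P Tv (insert (c k) (G.paSet (c k)) \ {Mi}) x
      rw [this]
  rw [hsum, hfinal.symm]
  have hE0 : condExp X P Tv (insert Mi (G.paSet Mi)) x = E 0 := rfl
  rw [hE0]
  ring

open Causal in
/-- If `M_i` satisfies the M-criterion, then `P`-almost surely (here:
everywhere, `P` being strictly positive)
`E[T|X_{M_i},X_{Pa(M_i)}] + Σₜ (E[T|X_{M_{i_t}},X_{Pa(M_{i_t})}] − E[T|X_{Pa(M_{i_t})}])`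
equals `E[T | X_{({M_{i_k}} ∪ Pa(M_{i_k})) \ {M_i}}]`; in particular it is a function of
the coordinates `V \ {M_i}`. -/
theorem statement_10 {V : Type} [Fintype V] [DecidableEq V]
    (G : Causal.Digraph V) (A Y : V) (hG : G.Acyclic) (hAY : A ≠ Y) (hA : G.anc A Y)
    (X : V → Finset ℝ) (hX : ∀ v, 2 ≤ (X v).card)
    (P : Config X → ℝ) (hP : IsPMF X P) (hpos : StrictPos X P) (hM : MarkovPMF G X P)
    (a : ℝ) (ha : a ∈ X A)
    (Mi : V) (hMi : Mi ∈ G.Mset A Y) (hMiY : Mi ≠ Y) (hcrit : G.MCrit A Y Mi)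
    (l : List V) (hl : G.IsTopoOrd (G.chSet Mi ∩ G.Mset A Y) l) (hlne : l ≠ []) :
    (∀ x : Config X,
      condExp X P (Tvar G X P A Y a) (insert Mi (G.paSet Mi)) x +
        ∑ t ∈ Finset.range l.length,
          (condExp X P (Tvar G X P A Y a) (insert (l.getD t Mi) (G.paSet (l.getD t Mi))) x -
            condExp X P (Tvar G X P A Y a) (G.paSet (l.getD t Mi)) x) =
      condExp X P (Tvar G X P A Y a)
        (insert (l.getD (l.length - 1) Mi) (G.paSet (l.getD (l.length - 1) Mi)) \ {Mi}) x) ∧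
    ∃ h : Config X → ℝ, (∀ x y : Config X, (∀ v, v ≠ Mi → x v = y v) → h x = h y) ∧
      ∀ x : Config X,
        condExp X P (Tvar G X P A Y a) (insert Mi (G.paSet Mi)) x +
          ∑ t ∈ Finset.range l.length,
            (condExp X P (Tvar G X P A Y a)
                (insert (l.getD t Mi) (G.paSet (l.getD t Mi))) x -
              condExp X P (Tvar G X P A Y a) (G.paSet (l.getD t Mi)) x) = h x := by
  constructor
  · exact statement_10' G A Y hG hAY hA X hX P hP hpos hM a ha Mi hMi hMiY hcrit l hl hlne
  · exact ⟨fun x => condExp X P (Tvar G X P A Y a)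
      (insert (l.getD (l.length - 1) Mi) (G.paSet (l.getD (l.length - 1) Mi)) \ {Mi}) x,
      fun x y hxy => condExp_agr (fun v hv => hxy v (fun he => hv.2 he)),
      fun x => statement_10' G A Y hG hAY hA X hX P hP hpos hM a ha Mi hMi hMiY hcrit
        l hl hlne x⟩
end
end

section
/- Let G be a directed acyclic graph on a finite vertex set V satisfying Assumption 1 (A ↦ Y), let W_j ∈ W(G) ∖ O(G), and let (W_{j_1},…,W_{j_r}), r ≥ 1, be a topological ordering of Ch(W_j,G) ∩ W(G). Then: (i) every set S ⊆ Pa(W_j,G) ∪ {W_j} such that (Pa(W_j,G) ∪ {W_j}) ∖ S ⫫_G O(G) | S contains W_j; (ii) if r > 1 then for each t = 1,…,r−1, every set S ⊆ Pa(W_{j_t},G) ∪ {W_{j_t}} such that (Pa(W_{j_t},G) ∪ {W_{j_t}}) ∖ S ⫫_G O(G) | S contains W_j; (iii) the only set S ⊆ Pa(W_j,G) such that Pa(W_j,G) ∖ S ⫫_G O(G) | S is S = Pa(W_j,G). (Equivalently: W_j ∈ E⁺_j, W_j ∈ E⁺_{j_t} for all t < r, and E⁻_j = Pa(W_j,G),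 where E⁺_v denotes the smallest subset E ⊆ Pa(v,G) ∪ {v} with (Pa(v,G) ∪ {v}) ∖ E ⫫_G O(G) | E and E⁻_v the smallest subset E ⊆ Pa(v,G) with Pa(v,G) ∖ E ⫫_G O(G) | E.) -/
open scoped Classical

noncomputable section

namespace Causal
namespace Digraph

variable {V : Type} {G : Digraph V}

private lemma getD_irrel {α : Type} (l : List α) {i : ℕ} (h : i < l.length) (d d' : α) :
    l.getD i d = l.getD i d' := by
  rw [List.getD_eq_getElem l d h, List.getD_eq_getElem l d' h]

private lemma chain_edge_getD {w : V} {L : List V} (hc : List.Chain G.Edge w L) :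
    ∀ i, i < L.length → G.Edge ((w :: L).getD i w) ((w :: L).getD (i + 1) w) := by
  induction L generalizing w with
  | nil => intro i hi; simp at hi
  | cons b L ih =>
    intro i hi
    rcases List.chain_cons.mp hc with ⟨h1, h2⟩
    cases i with
    | zero => simpa using h1
    | succ i =>
      have hi' : i < L.length := by simpa using Nat.lt_of_succ_lt_succ hi
      have := ih h2 i hi'
      rw [List.getD_cons_succ, List.getD_cons_succ]
      rwa [getD_irrel (b :: L) (by simp; omega) w b,
        getD_irrel (b :: L) (i := i + 1) (by simp; omega) w b]

private lemma chain_transGen_getD {w : V} {L : List V} (hc : List.Chain G.Edge w L)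
    {i j : ℕ} (hij : i < j) (hj : j ≤ L.length) :
    Relation.TransGen G.Edge ((w :: L).getD i w) ((w :: L).getD j w) := by
  induction j with
  | zero => omega
  | succ j ih =>
    rcases Nat.lt_or_ge i j with h | h
    · exact (ih h (by omega)).tail (chain_edge_getD hc j (by omega))
    · have : i = j := by omega
      subst this
      exact Relation.TransGen.single (chain_edge_getD hc i (by omega))

private lemma chain_reflTransGen_getD {w : V} {L : List V} (hc : List.Chain G.Edge w L)
    {i : ℕ} (hi : i ≤ L.length) :
    Relation.ReflTransGen G.Edge w ((w :: L).getD i w) := by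
  cases i with
  | zero => simp [Relation.ReflTransGen.refl]
  | succ i =>
    have := chain_transGen_getD hc (i := 0) (j := i + 1) (by omega) hi
    simpa using this.to_reflTransGen

/-- A causal `GPath` built from a chain list. -/
private def GPath.ofChain (hG : G.Acyclic) (w : V) (L : List V)
    (hc : List.Chain G.Edge w L) : G.GPath where
  n := L.length
  vert i := (w :: L).getD i w
  inj i j hi hj hij := by
    have hij' : (w :: L).getD i w = (w :: L).getD j w := hij
    rcases lt_trichotomy i j with h | h | h
    · exfalso
      have hT := chain_transGen_getD hc h hj
      rw [hij'] at hT
      exact hG _ hT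
    · exact h
    · exfalso
      have hT := chain_transGen_getD hc h hi
      rw [← hij'] at hT
      exact hG _ hT
  adj i hi := Or.inl (chain_edge_getD hc i hi)

private lemma anc_edge_cycle (hG : G.Acyclic) {c x : V}
    (h1 : Relation.ReflTransGen G.Edge c x) (h2 : G.Edge x c) : False :=
  hG c (Relation.TransGen.tail' h1 h2)

/-- Main contradiction engine: a fully unblocked causal chain contradicts d-separation. -/
private lemma no_block (hG : G.Acyclic) {w : V} {L : List V}
    (hc : List.Chain G.Edge w L) (hL : L ≠ []) {X T S : Set V} (hd : G.dsep X T S)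
    (hw : w ∈ X) (hwS : w ∉ S)
    (ho : (w :: L).getD L.length w ∈ T) (hoS : (w :: L).getD L.length w ∉ S)
    (hint : ∀ i, 0 < i → i < L.length → (w :: L).getD i w ∉ S) : False := by
  have hn : 1 ≤ L.length := List.length_pos_iff.mpr hL
  have hb := hd w ⟨hw, hwS⟩ _ ⟨ho, hoS⟩ (GPath.ofChain hG w L hc) hn rfl rfl
  rcases hb with ⟨i, hi0, hin, _, hiS⟩ | ⟨i, hcol, _⟩
  · exact hint i hi0 hin hiS
  · rcases hcol with ⟨hi0, hin, _, e2⟩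
    exact hG _ ((Relation.TransGen.single (chain_edge_getD hc i hin)).tail e2)

/-- From a vertex that is not in `M` nor equal to `A`, an `A`-avoiding directed chain
ending in `M` yields a directed chain ending in `O`. -/
private lemma chain_to_O (A Y : V) :
    ∀ (L : List V) (c : V), c ∉ G.Mset A Y → c ≠ A →
      List.Chain (fun a b => G.Edge a b ∧ a ≠ A ∧ b ≠ A) c L →
      (c :: L).getLast (List.cons_ne_nil _ _) ∈ G.Mset A Y →
      ∃ L' : List V, List.Chain G.Edge c L' ∧
        (c :: L').getD L'.length c ∈ G.Oset A Y := by
  intro L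
  induction L with
  | nil =>
    intro c hcM _ _ hlast
    simp only [List.getLast_singleton] at hlast
    exact absurd hlast hcM
  | cons b L ih =>
    intro c hcM hcA hch hlast
    rcases List.chain_cons.mp hch with ⟨⟨hE, _, hbA⟩, hch'⟩
    by_cases hbM : b ∈ G.Mset A Y
    · refine ⟨[], List.Chain.nil, ?_⟩
      refine ⟨?_, ?_⟩
      · simp only [paOf, Set.mem_iUnion]
        exact ⟨b, hbM, hE⟩
      · intro h
        rcases h with h | h
        · exact hcM h
        · exact hcA h
    · have hlast' : (b :: L).getLast (List.cons_ne_nil _ _) ∈ G.Mset A Y := by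
        rwa [List.getLast_cons (List.cons_ne_nil _ _)] at hlast
      rcases ih b hbM hbA hch' hlast' with ⟨L', hch'', ho⟩
      refine ⟨b :: L', List.chain_cons.mpr ⟨hE, hch''⟩, ?_⟩
      rw [show (b :: L').length = L'.length + 1 from rfl, List.getD_cons_succ]
      rwa [getD_irrel (b :: L') (by simp) c b]

/-- Every vertex of `W(G)` has a directed chain to the optimal adjustment set. -/
private lemma Wset_chain_to_O {A Y : V} (hAY : A ≠ Y) (hA : G.anc A Y)
    {w : V} (hw : w ∈ G.Wset A Y) :
    ∃ L : List V, List.Chain G.Edge w L ∧ (w :: L).getD L.length w ∈ G.Oset A Y := by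
  obtain ⟨h1, h2, h3⟩ := hw
  have hwA : w ≠ A := fun h => h1 (h ▸ Relation.ReflTransGen.refl)
  have hav : G.AvoidReach A w Y := by
    by_contra hav
    exact h3 ⟨hwA, h2, hav⟩
  obtain ⟨L, hch, hlast⟩ := List.exists_isChain_cons_of_relationReflTransGen hav
  have hwM : w ∉ G.Mset A Y := fun h => h1 h.2.1
  have hYM : Y ∈ G.Mset A Y := ⟨hAY.symm, hA, Relation.ReflTransGen.refl⟩
  exact chain_to_O A Y L w hwM hwA hch (by rw [hlast]; exact hYM)

end Digraph
end Causal
open Causal in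
/-- Properties of the minimal blocking sets `E⁺/E⁻` : (i) every
`S ⊆ Pa(W_j) ∪ {W_j}` with `(Pa(W_j) ∪ {W_j}) \ S ⫫ O(G) | S` contains `W_j`;
(ii) for `t < r`, every such blocking subset of `Pa(W_{j_t}) ∪ {W_{j_t}}` contains `W_j`;
(iii) the only `S ⊆ Pa(W_j)` with `Pa(W_j) \ S ⫫ O(G) | S` is `Pa(W_j)` itself. -/
theorem statement_11 {V : Type} [Fintype V]
    (G : Causal.Digraph V) (A Y : V) (hG : G.Acyclic) (hAY : A ≠ Y) (hA : G.anc A Y)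
    (Wj : V) (hWj : Wj ∈ G.Wset A Y \ G.Oset A Y)
    (l : List V) (hl : G.IsTopoOrd (G.chSet Wj ∩ G.Wset A Y) l) (hlne : l ≠ []) :
    (∀ S : Set V, S ⊆ insert Wj (G.paSet Wj) →
        G.dsep (insert Wj (G.paSet Wj) \ S) (G.Oset A Y) S → Wj ∈ S) ∧
    (∀ t, t + 1 < l.length → ∀ S : Set V,
        S ⊆ insert (l.getD t Wj) (G.paSet (l.getD t Wj)) →
        G.dsep (insert (l.getD t Wj) (G.paSet (l.getD t Wj)) \ S) (G.Oset A Y) S →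
        Wj ∈ S) ∧
    (∀ S : Set V, S ⊆ G.paSet Wj →
        G.dsep (G.paSet Wj \ S) (G.Oset A Y) S → S = G.paSet Wj) := by
  obtain ⟨hWjW, hWjO⟩ := hWj
  obtain ⟨L, hch, hO⟩ := Digraph.Wset_chain_to_O hAY hA hWjW
  have hLne : L ≠ [] := by
    intro h
    subst h
    simp only [List.length_nil, List.getD_cons_zero] at hO
    exact hWjO hO
  have hdesc : ∀ i, 0 < i → i ≤ L.length →
      Relation.TransGen G.Edge Wj ((Wj :: L).getD i Wj) := by
    intro i hi0 hi
    have := Digraph.chain_transGen_getD hch hi0 hi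
    simpa using this
  have killPa : ∀ x, Relation.TransGen G.Edge Wj x → x ∉ G.paSet Wj := by
    intro x hT hP
    exact Digraph.anc_edge_cycle hG hT.to_reflTransGen hP
  have killIns : ∀ x, Relation.TransGen G.Edge Wj x → x ∉ insert Wj (G.paSet Wj) := by
    intro x hT hx
    rcases Set.mem_insert_iff.mp hx with h | h
    · subst h; exact hG _ hT
    · exact killPa x hT h
  refine ⟨?_, ?_, ?_⟩
  · -- part (i)
    intro S hS hd
    by_contra hWS
    refine Digraph.no_block hG hch hLne hd ⟨Set.mem_insert _ _, hWS⟩ hWS hO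
      (fun h => killIns _ (hdesc L.length (List.length_pos_iff.mpr hLne) le_rfl) (hS h))
      (fun i hi0 hin h => killIns _ (hdesc i hi0 (le_of_lt hin)) (hS h))
  · -- part (ii)
    intro t ht S hS hd
    set c := l.getD t Wj with hc_def
    set c' := l.getD (t + 1) Wj with hc'_def
    obtain ⟨hnd, hmem, hpw⟩ := hl
    have htl : t < l.length := by omega
    have hcl : c ∈ l := by
      rw [hc_def, List.getD_eq_getElem l Wj htl]
      exact List.getElem_mem htl
    have hc'l : c' ∈ l := by
      rw [hc'_def, List.getD_eq_getElem l Wj ht]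
      exact List.getElem_mem ht
    obtain ⟨hEc, hcW⟩ := (hmem c).mp hcl
    obtain ⟨hEc', hc'W⟩ := (hmem c').mp hc'l
    have hpair : ¬ G.anc c' c := by
      have h0 := List.pairwise_iff_get.mp hpw ⟨t, htl⟩ ⟨t + 1, ht⟩ (by simp [Fin.lt_def])
      have e1 : l.get ⟨t, htl⟩ = c := by
        rw [hc_def, List.getD_eq_getElem l Wj htl, List.get_eq_getElem]
      have e2 : l.get ⟨t + 1, ht⟩ = c' := by
        rw [hc'_def, List.getD_eq_getElem l Wj ht, List.get_eq_getElem]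
      rw [e1, e2] at h0
      exact h0
    by_contra hWS
    have hWjPac : Wj ∈ G.paSet c := hEc
    have step : ∀ cc, cc ∈ G.Wset A Y → G.Edge Wj cc →
        (∀ x, Relation.ReflTransGen G.Edge cc x → x ∉ S) → False := by
      intro cc hccW hE kill
      obtain ⟨Lc, hchc, hOc⟩ := Digraph.Wset_chain_to_O hAY hA hccW
      have hch2 : List.Chain G.Edge Wj (cc :: Lc) := List.chain_cons.mpr ⟨hE, hchc⟩
      have heq : ∀ i, i ≤ Lc.length →
          (Wj :: cc :: Lc).getD (i + 1) Wj = (cc :: Lc).getD i cc := by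
        intro i hi
        rw [List.getD_cons_succ, Digraph.getD_irrel (cc :: Lc) (by simp; omega) Wj cc]
      refine Digraph.no_block hG hch2 (List.cons_ne_nil _ _) hd
        ⟨Set.mem_insert_of_mem _ hWjPac, hWS⟩ hWS ?_ ?_ ?_
      · rw [show (cc :: Lc).length = Lc.length + 1 from rfl, heq Lc.length le_rfl]
        exact hOc
      · rw [show (cc :: Lc).length = Lc.length + 1 from rfl, heq Lc.length le_rfl]
        exact kill _ (Digraph.chain_reflTransGen_getD hchc le_rfl)
      · intro i hi0 hin
        have hin' : i - 1 ≤ Lc.length := by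
          simp only [List.length_cons] at hin; omega
        rw [show i = (i - 1) + 1 by omega, heq (i - 1) hin']
        exact kill _ (Digraph.chain_reflTransGen_getD hchc hin')
    by_cases hcS : c ∈ S
    · refine step c' hc'W hEc' ?_
      intro x hR hxS
      rcases Set.mem_insert_iff.mp (hS hxS) with h | h
      · exact hpair (h ▸ hR)
      · exact hpair (hR.tail h)
    · refine step c hcW hEc ?_
      intro x hR hxS
      rcases Set.mem_insert_iff.mp (hS hxS) with h | h
      · exact hcS (h ▸ hxS)
      · exact Digraph.anc_edge_cycle hG hR h
  · -- part (iii)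
    intro S hS hd
    refine Set.Subset.antisymm hS ?_
    intro x hx
    by_contra hxS
    have hch2 : List.Chain G.Edge x (Wj :: L) := List.chain_cons.mpr ⟨hx, hch⟩
    have heq : ∀ i, i ≤ L.length →
        (x :: Wj :: L).getD (i + 1) x = (Wj :: L).getD i Wj := by
      intro i hi
      rw [List.getD_cons_succ, Digraph.getD_irrel (Wj :: L) (by simp; omega) x Wj]
    refine Digraph.no_block hG hch2 (List.cons_ne_nil _ _) hd ⟨hx, hxS⟩ hxS ?_ ?_ ?_
    · rw [show (Wj :: L).length = L.length + 1 from rfl, heq L.length le_rfl]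
      exact hO
    · rw [show (Wj :: L).length = L.length + 1 from rfl, heq L.length le_rfl]
      exact fun h => killPa _ (hdesc L.length (List.length_pos_iff.mpr hLne) le_rfl) (hS h)
    · intro i hi0 hin
      have hin' : i - 1 ≤ L.length := by
        simp only [List.length_cons] at hin; omega
      rw [show i = (i - 1) + 1 by omega, heq (i - 1) hin']
      intro h
      have hP := hS h
      rcases Nat.eq_or_lt_of_le (Nat.one_le_iff_ne_zero.mpr (by omega) : 1 ≤ i) with h1 | h1
      · have hWjeq : (Wj :: L).getD (i - 1) Wj = Wj := by
          rw [show i - 1 = 0 by omega]; simp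
        rw [hWjeq] at hP
        exact hG Wj (Relation.TransGen.single hP)
      · exact killPa _ (hdesc (i - 1) (by omega) hin') hP
end
end

section
/- Let G be a directed acyclic graph on a finite vertex set V satisfying Assumption 1 (A ↦ Y). Then: (i) for every M_i ∈ M(G), Ch(M_i,G) ∩ An(Y,G) ⊆ M(G) and Y ∈ De(M_i,G); (ii) for every W_j ∈ W(G), Ch(W_j,G) ∩ An(O(G),G) ⊆ W(G) and O(G) ∩ De(W_j,G) ≠ ∅. -/
open scoped Classical

noncomputable section

section Aux

open Causal

variable {V : Type} {G : Causal.Digraph V} {A Y : V}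

private lemma transGen_of_anc {u v : V} (h : G.anc u v) (hne : u ≠ v) :
    Relation.TransGen G.Edge u v :=
  ((Relation.reflTransGen_iff_eq_or_transGen.mp h).resolve_left (Ne.symm hne))

/-- If `u ↦ v` and `A` is not an ancestor of `v`, the path avoids `A`. -/
private lemma avoid_of_not_anc_to {u v : V} (h : G.anc u v) (hA : ¬ G.anc A v) :
    G.AvoidReach A u v := by
  induction h using Relation.ReflTransGen.head_induction_on with
  | refl => exact Relation.ReflTransGen.refl
  | head e hrest ih =>
    refine Relation.ReflTransGen.head ⟨e, ?_, ?_⟩ ih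
    · rintro rfl; exact hA (Relation.ReflTransGen.head e hrest)
    · rintro rfl; exact hA hrest

/-- If `u ↦ v` and `A` is not a descendant of `u`, the path avoids `A`. -/
private lemma avoid_of_not_desc {u v : V} (h : G.anc u v) (hA : ¬ G.anc u A) :
    G.AvoidReach A u v := by
  revert hA
  induction h using Relation.ReflTransGen.head_induction_on with
  | refl => exact fun _ => Relation.ReflTransGen.refl
  | head e hrest ih =>
    intro hA
    refine Relation.ReflTransGen.head ⟨e, ?_, ?_⟩ (ih ?_)
    · rintro rfl; exact hA Relation.ReflTransGen.refl
    · rintro rfl; exact hA (Relation.ReflTransGen.single e)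
    · exact fun hc => hA (Relation.ReflTransGen.head e hc)

/-- Along a directed path avoiding `A` from a vertex outside `M(G)` to `Y ∈ M(G)`,
the last vertex outside `M(G)` lies in `O(G)`. -/
private lemma exists_O_desc {u : V} (h : G.AvoidReach A u Y)
    (hY : Y ∈ G.Mset A Y) (hu : u ∉ G.Mset A Y) :
    ∃ o ∈ G.Oset A Y, G.anc u o := by
  revert hu
  induction h using Relation.ReflTransGen.head_induction_on with
  | refl => exact fun hu => absurd hY hu
  | @head a c e hrest ih =>
    intro hu
    obtain ⟨he, haA, hcA⟩ := e
    by_cases hc : c ∈ G.Mset A Y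
    · refine ⟨a, ⟨?_, ?_⟩, Relation.ReflTransGen.refl⟩
      · exact Set.mem_biUnion hc he
      · rintro (h1 | h2)
        · exact hu h1
        · exact haA h2
    · obtain ⟨o, ho, hanc⟩ := ih hc
      exact ⟨o, ho, Relation.ReflTransGen.head he hanc⟩

end Aux

open Causal in
/-- (i) For every mediator `M_i`, `Ch(M_i) ∩ An(Y) ⊆ M(G)` and
`Y ∈ De(M_i)`; (ii) for every `W_j ∈ W(G)`, `Ch(W_j) ∩ An(O(G)) ⊆ W(G)` and
`O(G) ∩ De(W_j) ≠ ∅`. -/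
theorem statement_12 {V : Type} [Fintype V]
    (G : Causal.Digraph V) (A Y : V) (hG : G.Acyclic) (hAY : A ≠ Y) (hA : G.anc A Y) :
    (∀ Mi ∈ G.Mset A Y, G.chSet Mi ∩ G.anSet Y ⊆ G.Mset A Y ∧ Y ∈ G.deSet Mi) ∧
    (∀ Wj ∈ G.Wset A Y, G.chSet Wj ∩ G.anOf (G.Oset A Y) ⊆ G.Wset A Y ∧
      (G.Oset A Y ∩ G.deSet Wj).Nonempty) := by
  have hYM : Y ∈ G.Mset A Y := ⟨hAY.symm, hA, Relation.ReflTransGen.refl⟩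
  constructor
  · intro Mi hMi
    obtain ⟨hMiA, hAMi, hMiY⟩ := hMi
    constructor
    · rintro c ⟨hc, hcY⟩
      refine ⟨?_, Relation.ReflTransGen.tail hAMi hc, hcY⟩
      intro h
      exact hG A (Relation.TransGen.tail (transGen_of_anc hAMi (Ne.symm hMiA)) (h ▸ hc))
    · exact hMiY
  · intro Wj hWj
    obtain ⟨hAWj, hWjY, hWjI⟩ := hWj
    have hWjA : Wj ≠ A := by rintro rfl; exact hAWj Relation.ReflTransGen.refl
    have havoid : G.AvoidReach A Wj Y := by
      by_contra hav
      exact hWjI ⟨hWjA, hWjY, hav⟩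
    have hWjM : Wj ∉ G.Mset A Y := fun hm => hAWj hm.2.1
    constructor
    · rintro c ⟨hc, hcO⟩
      obtain ⟨o, ho, hco⟩ : ∃ o ∈ G.Oset A Y, G.anc c o := by
        simpa [Causal.Digraph.anOf, Causal.Digraph.anSet] using hcO
      obtain ⟨hoPa, hoM⟩ := ho
      obtain ⟨m, hm, hom⟩ : ∃ m ∈ G.Mset A Y, G.Edge o m := by
        simpa [Causal.Digraph.paOf, Causal.Digraph.paSet] using hoPa
      have hoA : o ≠ A := fun h => hoM (Or.inr h)
      have hnAo : ¬ G.anc A o := by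
        intro h
        exact hoM (Or.inl ⟨hoA, h, (Relation.ReflTransGen.single hom).trans hm.2.2⟩)
      have hnAc : ¬ G.anc A c := fun h => hnAo (h.trans hco)
      have hcA : c ≠ A := fun h => hnAc (h ▸ Relation.ReflTransGen.refl)
      have hcY : G.anc c Y := (hco.tail hom).trans hm.2.2
      refine ⟨hnAc, hcY, ?_⟩
      rintro ⟨-, -, hnav⟩
      have hnmA : ¬ G.anc m A := fun hmA' =>
        hG A (Relation.TransGen.trans_left (transGen_of_anc hm.2.1 (Ne.symm hm.1)) hmA')
      exact hnav ((avoid_of_not_anc_to hco hnAo).trans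
        (Relation.ReflTransGen.head ⟨hom, hoA, hm.1⟩ (avoid_of_not_desc hm.2.2 hnmA)))
    · obtain ⟨o, ho, hanc⟩ := exists_O_desc havoid hYM hWjM
      exact ⟨o, ho, hanc⟩
end
end

section
/- Let G be a directed acyclic graph on a finite vertex set V satisfying Assumption 1 (A ↦ Y). Suppose W_j ∈ W(G) ∖ O(G) fails the W-criterion, and let (W_{j_1},…,W_{j_r}) be a topological ordering of Ch(W_j,G) ∩ W(G). Then one of the following graphical configurations holds in G: (a) W_{j_s} and W_{j_k} are not adjacent for some s ≠ k in {1,…,r}; (b) there exist k ∈ {1,…,r} and W_i ∈ W(G) with W_i ≠ W_j such that W_j → W_{j_k} ← W_i is in G and W_i ∉ Adj(W_j,G); (c) there exist k ∈ {1,…,r} and W_i ∈ W(G) with W_i ∈ Pa(W_j,G) ∖ Pa(W_{j_k},G), and a path p = ⟨W_i, …, O′⟩ with O′ ∈ O(G) ∖ Pa(W_{j_k},G) that is d-connecting given Pa(W_{j_k},G) (if W_i ∈ O(G) then W_i = O′ and p has length 0). -/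
open scoped Classical

noncomputable section

/-!
Suppose none of (a), (b), (c) occurs. By ¬(a) the children of `W_j` in `W(G)` are pairwise
adjacent, so their topological ordering is unique and `W_j → W_{j_1} → ⋯ → W_{j_r}` is a chain
of edges; it is nonempty because the first step of a directed path from `W_j ∉ O(G)` to `Y`
avoiding `A` stays in `W(G)`. By ¬(b) every parent of `W_{j_t}` is an earlier chain vertex or a
parent of `W_j`, and a parent of `W_j` outside `Pa(W_{j_{t-1}})` would reach `O(G)` along a
causal path through `W_{j_t}`, contradicting ¬(c); this gives (ii). For (i), a path from `W_j`
to `O(G)` that is d-connecting given `({W_{j_r}} ∪ Pa(W_{j_r})) ∖ {W_j}` meets, within two steps,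
a parent of `W_j` outside `Pa(W_{j_r})` from which it stays d-connecting given `Pa(W_{j_r})`,
again contradicting ¬(c).
-/

namespace Causal.Digraph

open Relation

variable {V : Type} {G : Digraph V}

theorem Acyclic.not_edge_of_anc (hG : G.Acyclic) {a b : V} (h : G.anc a b) : ¬ G.Edge b a :=
  fun he => hG b (TransGen.trans_left (.single he) h)

theorem Acyclic.irrefl (hG : G.Acyclic) {a : V} : ¬ G.Edge a a :=
  hG.not_edge_of_anc .refl

theorem Acyclic.asymm (hG : G.Acyclic) {a b : V} (h : G.Edge a b) : ¬ G.Edge b a :=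
  hG.not_edge_of_anc (.single h)

theorem Acyclic.anc_antisymm (hG : G.Acyclic) {a b : V} (hab : G.anc a b) (hba : G.anc b a) :
    a = b := by
  rcases ReflTransGen.cases_head hab with h | ⟨c, hac, hcb⟩
  · exact h
  · exact absurd (TransGen.head' hac (ReflTransGen.trans hcb hba)) (hG a)

theorem anc_of_edge {a b : V} (h : G.Edge a b) : G.anc a b := .single h

theorem anc_of_forall_edge {f : ℕ → V} {m : ℕ} (hf : ∀ i < m, G.Edge (f i) (f (i + 1)))
    {i j : ℕ} (hij : i ≤ j) (hjm : j ≤ m) : G.anc (f i) (f j) := by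
  induction j, hij using Nat.le_induction with
  | base => exact .refl
  | succ j _ ih => exact ReflTransGen.tail (ih (by omega)) (hf j (by omega))

theorem AvoidReach.anc {A x w : V} (h : G.AvoidReach A x w) : G.anc x w :=
  ReflTransGen.mono (fun _ _ h => h.1) _ _ h

theorem avoidReach_of_anc {A x w : V} (h : G.anc x w)
    (hA : ∀ z, G.anc x z → G.anc z w → z ≠ A) : G.AvoidReach A x w := by
  induction h using ReflTransGen.head_induction_on with
  | refl => exact .refl
  | head hxc hcw ih =>
    exact .head ⟨hxc, hA _ .refl (.head hxc hcw), hA _ (.single hxc) hcw⟩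
      (ih fun z hcz hzw => hA z (.head hxc hcz) hzw)

theorem mem_Wset_iff {A Y v : V} :
    v ∈ G.Wset A Y ↔ ¬ G.anc A v ∧ G.AvoidReach A v Y := by
  constructor
  · rintro ⟨hAv, hvY, hvI⟩
    refine ⟨hAv, ?_⟩
    by_contra h
    exact hvI ⟨fun hvA => hAv (hvA ▸ .refl), hvY, h⟩
  · rintro ⟨hAv, hav⟩
    exact ⟨hAv, hav.anc, fun hI => hI.2.2 hav⟩

theorem mem_Wset_of_anc {A Y x w : V} (hxw : G.anc x w) (hw : w ∈ G.Wset A Y) :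
    x ∈ G.Wset A Y := by
  rw [mem_Wset_iff] at hw ⊢
  refine ⟨fun hAx => hw.1 (ReflTransGen.trans hAx hxw),
    ReflTransGen.trans (avoidReach_of_anc hxw ?_) hw.2⟩
  rintro z - hzw rfl
  exact hw.1 hzw

theorem mem_Wset_of_edge {A Y x w : V} (he : G.Edge x w) (hw : w ∈ G.Wset A Y) :
    x ∈ G.Wset A Y :=
  mem_Wset_of_anc (anc_of_edge he) hw

theorem mem_Oset_of_edge {A Y x m : V} (he : G.Edge x m) (hm : m ∈ G.Mset A Y)
    (hx : x ∉ G.Mset A Y) (hxA : x ≠ A) : x ∈ G.Oset A Y :=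
  ⟨Set.mem_biUnion hm he, by rintro (h | h) <;> [exact hx h; exact hxA h]⟩

theorem Oset_subset_Wset (hG : G.Acyclic) {A Y : V} : G.Oset A Y ⊆ G.Wset A Y := by
  rintro x ⟨hx, hxMA⟩
  obtain ⟨m, hm, hxm⟩ := Set.mem_iUnion₂.mp hx
  have hxA : x ≠ A := fun h => hxMA (Or.inr h)
  have hAx : ¬ G.anc A x := fun h => hxMA (Or.inl ⟨hxA, h, .head hxm hm.2.2⟩)
  refine mem_Wset_iff.mpr ⟨hAx, .head ⟨hxm, hxA, hm.1⟩ (avoidReach_of_anc hm.2.2 ?_)⟩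
  rintro z hmz - rfl
  exact hm.1 (hG.anc_antisymm hmz hm.2.1)

theorem exists_anc_mem_Oset {A Y x : V} (hA : G.anc A Y) (hx : x ∈ G.Wset A Y) :
    ∃ o ∈ G.Oset A Y, G.anc x o := by
  obtain ⟨hAx, hxY⟩ := mem_Wset_iff.mp hx
  induction hxY using ReflTransGen.head_induction_on with
  | refl => exact absurd hA hAx
  | @head x c hxc hcY ih =>
    obtain ⟨hxc, hxA, hcA⟩ := hxc
    by_cases hAc : G.anc A c
    · refine ⟨x, mem_Oset_of_edge hxc ⟨hcA, hAc, AvoidReach.anc hcY⟩ ?_ hxA, .refl⟩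
      exact fun hxM => hAx hxM.2.1
    · obtain ⟨o, ho, hco⟩ := ih (mem_Wset_iff.mpr ⟨hAc, hcY⟩) hAc
      exact ⟨o, ho, .head hxc hco⟩

theorem exists_edge_mem_Wset {A Y w : V} (hA : G.anc A Y)
    (hw : w ∈ G.Wset A Y \ G.Oset A Y) : ∃ c, G.Edge w c ∧ c ∈ G.Wset A Y := by
  obtain ⟨hAw, hwY⟩ := mem_Wset_iff.mp hw.1
  rcases ReflTransGen.cases_head hwY with rfl | ⟨c, ⟨hwc, hwA, hcA⟩, hcY⟩
  · exact absurd hA hAw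
  · refine ⟨c, hwc, mem_Wset_iff.mpr ⟨fun hAc => hw.2 ?_, hcY⟩⟩
    exact mem_Oset_of_edge hwc ⟨hcA, hAc, AvoidReach.anc hcY⟩ (fun h => hAw h.2.1) hwA

namespace GPath

def single (x : V) : G.GPath where
  n := 0
  vert _ := x
  inj _ _ hi hj _ := by omega
  adj _ h := absurd h (Nat.not_lt_zero _)

def drop (p : G.GPath) (k : ℕ) (hk : k ≤ p.n) : G.GPath where
  n := p.n - k
  vert i := p.vert (k + i)
  inj i j hi hj h := by have := p.inj _ _ (by omega) (by omega) h; omega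
  adj i hi := p.adj (k + i) (by omega)

def cons (x : V) (p : G.GPath) (hx : ¬ p.Mem x) (he : G.Edge x p.first) : G.GPath where
  n := p.n + 1
  vert
    | 0 => x
    | i + 1 => p.vert i
  inj
    | 0, 0, _, _, _ => rfl
    | 0, j + 1, _, hj, h => (hx ⟨j, by omega, h.symm⟩).elim
    | i + 1, 0, hi, _, h => (hx ⟨i, by omega, h⟩).elim
    | i + 1, j + 1, hi, hj, h => by rw [p.inj i j (by omega) (by omega) h]
  adj
    | 0, _ => Or.inl he
    | i + 1, hi => p.adj i (by omega)

variable {p : G.GPath} {C : Set V} {k : ℕ}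

theorem drop_last (hk : k ≤ p.n) : (p.drop k hk).last = p.last := by
  simp only [last, drop, Nat.add_sub_cancel' hk]

theorem isCollider_drop_iff (hk : k ≤ p.n) {i : ℕ} (hi : 0 < i) :
    (p.drop k hk).IsCollider i ↔ p.IsCollider (k + i) := by
  have e : k + (i - 1) = k + i - 1 := by omega
  simp only [IsCollider, drop, e, ← Nat.add_assoc]
  constructor
  · rintro ⟨-, hin, h⟩
    exact ⟨by omega, by omega, h⟩
  · rintro ⟨-, hin, h⟩
    exact ⟨hi, by omega, h⟩

theorem anc_vert_of_causal (hp : p.Causal) {i j : ℕ} (hij : i ≤ j) (hj : j ≤ p.n) :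
    G.anc (p.vert i) (p.vert j) :=
  anc_of_forall_edge hp hij hj

theorem causal_drop (hp : p.Causal) (hk : k ≤ p.n) : (p.drop k hk).Causal :=
  fun i hi => hp (k + i) (by simp only [GPath.drop] at hi; omega)

theorem causal_cons (hp : p.Causal) {x : V} (hx : ¬ p.Mem x) (he : G.Edge x p.first) :
    (p.cons x hx he).Causal
  | 0, _ => he
  | i + 1, hi => hp i (by simp only [GPath.cons] at hi; omega)

theorem not_isCollider_of_causal (hG : G.Acyclic) (hp : p.Causal) (i : ℕ) : ¬ p.IsCollider i :=
  fun hi => hG.asymm (hp i hi.2.1) hi.2.2.2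

theorem not_blocked_of_causal (hG : G.Acyclic) (hp : p.Causal)
    (hC : ∀ i, 0 < i → i < p.n → p.vert i ∉ C) : ¬ p.Blocked C := by
  rintro (⟨i, hi0, hin, -, hmem⟩ | ⟨i, hcol, -⟩)
  · exact hC i hi0 hin hmem
  · exact not_isCollider_of_causal hG hp i hcol

theorem exists_causal_of_anc {x y : V} (h : G.anc x y) :
    ∃ p : G.GPath, p.Causal ∧ p.first = x ∧ p.last = y := by
  induction h using ReflTransGen.head_induction_on with
  | refl => exact ⟨single y, fun i hi => absurd hi (Nat.not_lt_zero i), rfl, rfl⟩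
  | @head x c hxc _ ih =>
    obtain ⟨p, hp, hpc, hpy⟩ := ih
    by_cases hx : p.Mem x
    · obtain ⟨i, hi, rfl⟩ := hx
      exact ⟨p.drop i hi, causal_drop hp hi, rfl, (drop_last hi).trans hpy⟩
    · exact ⟨p.cons x hx (hpc ▸ hxc), causal_cons hp hx _, rfl, hpy⟩

theorem isCollider_of_mem (hp : ¬ p.Blocked C) {i : ℕ} (hi0 : 0 < i) (hin : i < p.n)
    (hmem : p.vert i ∈ C) : p.IsCollider i := by
  by_contra hcol
  exact hp (Or.inl ⟨i, hi0, hin, hcol, hmem⟩)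

theorem mem_anOf_of_isCollider (hp : ¬ p.Blocked C) {i : ℕ} (hi : p.IsCollider i) :
    p.vert i ∈ G.anOf C := by
  by_contra h
  exact hp (Or.inr ⟨i, hi, h⟩)

theorem anc_last_or_exists_anc_of_not_blocked (hp : ¬ p.Blocked C) (h1 : 1 ≤ p.n)
    (he : G.Edge (p.vert 0) (p.vert 1)) :
    G.anc (p.vert 1) p.last ∨ ∃ c ∈ C, G.anc (p.vert 1) c := by
  by_cases hc : p.Causal
  · exact Or.inl (anc_vert_of_causal hc h1 le_rfl)
  have hex : ∃ m, m < p.n ∧ ¬ G.Edge (p.vert m) (p.vert (m + 1)) := by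
    simpa [Causal] using hc
  obtain ⟨hmn, hm⟩ := Nat.find_spec hex
  have hfwd : ∀ i < Nat.find hex, G.Edge (p.vert i) (p.vert (i + 1)) := fun i hi => by
    by_contra h
    exact Nat.find_min hex hi ⟨by omega, h⟩
  have hm0 : 0 < Nat.find hex := Nat.pos_of_ne_zero fun h => hm (h ▸ he)
  -- the first edge pointing back towards `p.vert 0` ends in a collider
  have hcol : p.IsCollider (Nat.find hex) := by
    refine ⟨hm0, hmn, ?_, (p.adj _ hmn).resolve_left hm⟩
    simpa [Nat.sub_add_cancel hm0] using hfwd (Nat.find hex - 1) (by omega)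
  obtain ⟨c, hc, hmc⟩ := Set.mem_iUnion₂.mp (mem_anOf_of_isCollider hp hcol)
  exact Or.inr ⟨c, hc, ReflTransGen.trans (anc_of_forall_edge hfwd hm0 le_rfl) hmc⟩

theorem not_mem_of_edge_pred (hG : G.Acyclic) (hp : ¬ p.Blocked C) (hlast : p.last ∉ C)
    {j : ℕ} (hj0 : 0 < j) (hjn : j ≤ p.n) (he : G.Edge (p.vert j) (p.vert (j - 1))) :
    p.vert j ∉ C := by
  rcases hjn.lt_or_eq with hjn | rfl
  · exact fun hmem => hG.asymm (isCollider_of_mem hp hj0 hjn hmem).2.2.1 he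
  · exact hlast

theorem vert_ne_first {i : ℕ} (hi0 : 0 < i) (hin : i ≤ p.n) : p.vert i ≠ p.first :=
  fun h => hi0.ne' (p.inj i 0 hin (Nat.zero_le _) h)

theorem mem_anOf_paSet_of_isCollider (hG : G.Acyclic) {b : V}
    (hp : ¬ p.Blocked (insert b (G.paSet b) \ {p.first}))
    (hlast : p.last ∉ insert b (G.paSet b) \ {p.first}) {i : ℕ} (hi : p.IsCollider i) :
    p.vert i ∈ G.anOf (G.paSet b) := by
  obtain ⟨c, ⟨hc | hc, -⟩, hic⟩ := Set.mem_iUnion₂.mp (mem_anOf_of_isCollider hp hi)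
  · subst hc
    rcases ReflTransGen.cases_tail hic with hib | ⟨z, hiz, hzb⟩
    · -- the neighbour `p.vert (i + 1)` of a collider at `b` would be an unblocked parent of `b`
      refine absurd ⟨Or.inr (hib ▸ hi.2.2.2), vert_ne_first (by omega) hi.2.1⟩
        (not_mem_of_edge_pred hG hp hlast (by omega) hi.2.1 ?_)
      simpa using hi.2.2.2
    · exact Set.mem_biUnion hzb hiz
  · exact Set.mem_biUnion hc hic

theorem not_blocked_drop {C' : Set V} (hp : ¬ p.Blocked C) (hk : k ≤ p.n)
    (hC : ∀ i, k < i → i < p.n → p.vert i ∈ C' → p.vert i ∈ C)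
    (hcol : ∀ i, p.IsCollider i → p.vert i ∈ G.anOf C') : ¬ (p.drop k hk).Blocked C' := by
  rintro (⟨i, hi0, hin, hncol, hmem⟩ | ⟨i, hi, hnan⟩)
  · have hin : i < p.n - k := hin
    exact hncol ((isCollider_drop_iff hk hi0).mpr
      (isCollider_of_mem hp (by omega) (by omega) (hC _ (by omega) (by omega) hmem)))
  · exact hnan (hcol _ ((isCollider_drop_iff hk hi.1).mp hi))

end GPath

namespace IsTopoOrd

variable {S : Set V} {l : List V}

theorem getD_mem (hl : G.IsTopoOrd S l) {s : ℕ} (hs : s < l.length) (d : V) : l.getD s d ∈ S :=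
  (hl.2.1 _).mp (List.getD_eq_getElem l d hs ▸ List.getElem_mem hs)

theorem exists_getD_eq (hl : G.IsTopoOrd S l) {v : V} (hv : v ∈ S) (d : V) :
    ∃ s < l.length, l.getD s d = v := by
  obtain ⟨s, hs, h⟩ := List.mem_iff_getElem.mp ((hl.2.1 v).mpr hv)
  exact ⟨s, hs, (List.getD_eq_getElem l d hs).trans h⟩

theorem not_anc_getD (hl : G.IsTopoOrd S l) {s k : ℕ} (hsk : s < k) (hk : k < l.length)
    (d : V) : ¬ G.anc (l.getD k d) (l.getD s d) := by
  rw [List.getD_eq_getElem l d hk, List.getD_eq_getElem l d (hsk.trans hk)]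
  exact List.pairwise_iff_getElem.mp hl.2.2 s k _ hk hsk

theorem eq_of_adj {l' : List V} (hl : G.IsTopoOrd S l) (hl' : G.IsTopoOrd S l')
    (hS : ∀ a ∈ S, ∀ b ∈ S, a ≠ b → a ∈ G.adjSet b) : l = l' := by
  refine List.Perm.eq_of_pairwise (fun a b ha hb hba hab => ?_) hl.2.2 hl'.2.2
    ((List.perm_ext_iff_of_nodup hl.1 hl'.1).mpr fun v => (hl.2.1 v).trans (hl'.2.1 v).symm)
  by_contra hne
  rcases hS a ((hl.2.1 a).mp ha) b ((hl'.2.1 b).mp hb) hne with h | h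
  · exact hab (anc_of_edge h)
  · exact hba (anc_of_edge h)

end IsTopoOrd

variable {A Y Wj : V} {l : List V}

/-- None of the configurations (a), (b), (c) occurs for `Wj` and the ordering `l`. -/
structure NoConfigs (G : Digraph V) (A Y Wj : V) (l : List V) : Prop where
  adj : ∀ s, s < l.length → ∀ k, k < l.length → s ≠ k → l.getD s Wj ∈ G.adjSet (l.getD k Wj)
  shielded : ∀ k, k < l.length → ∀ Wi ∈ G.Wset A Y, Wi ≠ Wj → G.Edge Wj (l.getD k Wj) →
    G.Edge Wi (l.getD k Wj) → Wi ∈ G.adjSet Wj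
  blocked : ∀ k, k < l.length → ∀ Wi ∈ G.Wset A Y, Wi ∈ G.paSet Wj \ G.paSet (l.getD k Wj) →
    ∀ p : G.GPath, p.first = Wi → p.last ∈ G.Oset A Y \ G.paSet (l.getD k Wj) →
      p.Blocked (G.paSet (l.getD k Wj))

@[simp]
theorem chainD_succ (t : ℕ) : chainD Wj l (t + 1) = l.getD t Wj := by
  simp [chainD]

theorem exists_unblocked_path_of_edge (hG : G.Acyclic) (hA : G.anc A Y) {x v : V}
    (hxv : G.Edge x v) (hv : v ∈ G.Wset A Y) {C : Set V} (hC : ∀ z, G.anc v z → z ∉ C) :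
    ∃ p : G.GPath, p.first = x ∧ p.last ∈ G.Oset A Y \ C ∧ ¬ p.Blocked C := by
  obtain ⟨o, ho, hvo⟩ := exists_anc_mem_Oset hA hv
  obtain ⟨q, hq, rfl, rfl⟩ := GPath.exists_causal_of_anc hvo
  have hanc : ∀ i ≤ q.n, G.anc q.first (q.vert i) := fun i hi =>
    GPath.anc_vert_of_causal hq (Nat.zero_le i) hi
  have hx : ¬ q.Mem x := fun ⟨i, hi, hqi⟩ => hG.not_edge_of_anc (hqi ▸ hanc i hi) hxv
  refine ⟨q.cons x hx hxv, rfl, ⟨ho, hC _ (hanc _ le_rfl)⟩,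
    GPath.not_blocked_of_causal hG (GPath.causal_cons hq hx hxv) ?_⟩
  rintro (_ | i) hi0 hin
  · omega
  · exact hC _ (hanc i (by simp only [GPath.cons] at hin; omega))

theorem edge_chainD_of_lt (hl : G.IsTopoOrd (G.chSet Wj ∩ G.Wset A Y) l)
    (h : G.NoConfigs A Y Wj l) {u t : ℕ} (hut : u < t)
    (ht : t ≤ l.length) : G.Edge (chainD Wj l u) (chainD Wj l t) := by
  obtain ⟨t, rfl⟩ := Nat.exists_eq_add_one_of_ne_zero (by omega : t ≠ 0)
  rcases u with _ | u
  · exact (hl.getD_mem ht Wj).1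
  · rw [chainD_succ, chainD_succ]
    rcases h.adj u (by omega) t ht (by omega) with he | he
    · exact he
    · exact absurd (anc_of_edge he) (hl.not_anc_getD (by omega) ht Wj)

theorem mem_insert_chainD (hl : G.IsTopoOrd (G.chSet Wj ∩ G.Wset A Y) l)
    (h : G.NoConfigs A Y Wj l) {u t : ℕ} (hut : u ≤ t)
    (ht : t ≤ l.length) : chainD Wj l u ∈ insert (chainD Wj l t) (G.paSet (chainD Wj l t)) := by
  rcases hut.lt_or_eq with hut | rfl
  · exact Or.inr (edge_chainD_of_lt hl h hut ht)
  · exact Or.inl rfl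

theorem paSet_getD_subset (hG : G.Acyclic) (hl : G.IsTopoOrd (G.chSet Wj ∩ G.Wset A Y) l)
    (h : G.NoConfigs A Y Wj l) {t : ℕ} (ht : t < l.length) {x : V}
    (hx : x ∈ G.paSet (l.getD t Wj)) :
    (∃ u ≤ t, x = chainD Wj l u) ∨ x ∈ G.paSet Wj := by
  by_cases hxWj : x = Wj
  · exact Or.inl ⟨0, Nat.zero_le t, hxWj⟩
  have hxW : x ∈ G.Wset A Y := mem_Wset_of_edge hx (hl.getD_mem ht Wj).2
  rcases h.shielded t ht x hxW hxWj (hl.getD_mem ht Wj).1 hx with hpa | hch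
  · exact Or.inr hpa
  obtain ⟨u, hu, rfl⟩ := hl.exists_getD_eq ⟨hch, hxW⟩ Wj
  refine Or.inl ⟨u + 1, ?_, (chainD_succ u).symm⟩
  rcases lt_trichotomy u t with hut | rfl | htu
  · exact hut
  · exact absurd hx hG.irrefl
  · exact absurd (anc_of_edge hx) (hl.not_anc_getD htu hu Wj)

theorem paSet_chainD_subset (hG : G.Acyclic) (hl : G.IsTopoOrd (G.chSet Wj ∩ G.Wset A Y) l)
    (h : G.NoConfigs A Y Wj l) {t : ℕ} (ht : t ≤ l.length) {x : V}
    (hx : x ∈ G.paSet (chainD Wj l t)) :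
    (∃ u < t, x = chainD Wj l u) ∨ x ∈ G.paSet Wj := by
  rcases t with _ | t
  · exact Or.inr hx
  · rcases paSet_getD_subset hG hl h ht hx with ⟨u, hu, hxu⟩ | hpa
    · exact Or.inl ⟨u, by omega, hxu⟩
    · exact Or.inr hpa

theorem paSet_chainD_succ_subset (hG : G.Acyclic) (hA : G.anc A Y) (hWj : Wj ∈ G.Wset A Y)
    (hl : G.IsTopoOrd (G.chSet Wj ∩ G.Wset A Y) l) (h : G.NoConfigs A Y Wj l) {t : ℕ}
    (ht : t < l.length) :
    G.paSet (chainD Wj l (t + 1)) ⊆ insert (chainD Wj l t) (G.paSet (chainD Wj l t)) := by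
  intro x hx
  rcases paSet_chainD_subset hG hl h ht hx with ⟨u, hu, rfl⟩ | hpa
  · exact mem_insert_chainD hl h (by omega) ht.le
  rcases t with _ | t
  · exact Or.inr hpa
  by_contra hxt
  -- a causal path `x → l[t+1] → ⋯ → O` witnesses configuration (c) at `l[t]`
  rw [chainD_succ] at hx hxt
  obtain ⟨p, hpx, hpO, hp⟩ := exists_unblocked_path_of_edge hG hA hx (hl.getD_mem ht Wj).2
    (C := G.paSet (l.getD t Wj)) fun z hz hzt =>
      hl.not_anc_getD (Nat.lt_succ_self t) ht Wj (ReflTransGen.tail hz hzt)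
  exact hp (h.blocked t (by omega) x (mem_Wset_of_edge hpa hWj)
    ⟨hpa, fun h' => hxt (Or.inr h')⟩ p hpx hpO)

theorem dsep_paSet_chainD_diff (hG : G.Acyclic) (hWj : Wj ∈ G.Wset A Y)
    (hl : G.IsTopoOrd (G.chSet Wj ∩ G.Wset A Y) l) (h : G.NoConfigs A Y Wj l) {t : ℕ}
    (ht : t < l.length) :
    G.dsep (G.paSet (chainD Wj l t) \ G.paSet (chainD Wj l (t + 1))) (G.Oset A Y)
      (G.paSet (chainD Wj l (t + 1))) := by
  rintro x ⟨⟨hxt, hxt'⟩, -⟩ o ho q - hqx rfl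
  have hxWj : x ∈ G.paSet Wj := by
    rcases paSet_chainD_subset hG hl h ht.le hxt with ⟨u, hu, rfl⟩ | hpa
    · exact absurd (edge_chainD_of_lt hl h (by omega) ht) hxt'
    · exact hpa
  rw [chainD_succ] at hxt' ho ⊢
  exact h.blocked t ht x (mem_Wset_of_edge hxWj hWj) ⟨hxWj, hxt'⟩ q hqx ho

theorem exists_vert_mem_paSet_of_not_blocked (hG : G.Acyclic)
    (hl : G.IsTopoOrd (G.chSet Wj ∩ G.Wset A Y) l) (h : G.NoConfigs A Y Wj l) (hne : l ≠ [])
    {q : G.GPath} (hq0 : q.first = Wj) (hq1 : 1 ≤ q.n)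
    (hconn : ¬ q.Blocked (insert (chainD Wj l l.length) (G.paSet (chainD Wj l l.length)) \ {Wj}))
    (hlast : q.last ∉ insert (chainD Wj l l.length) (G.paSet (chainD Wj l l.length)) \ {Wj})
    (hlastW : q.last ∈ G.Wset A Y) :
    ∃ j, 0 < j ∧ j ≤ q.n ∧ q.vert j ∈ G.paSet Wj \ G.paSet (chainD Wj l l.length) := by
  set b := chainD Wj l l.length
  have hbW : b ∈ G.Wset A Y := by
    obtain ⟨k, hk⟩ := Nat.exists_eq_add_one_of_ne_zero (List.length_pos_iff.mpr hne).ne'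
    simpa only [b, hk, chainD_succ] using (hl.getD_mem (by omega) Wj).2
  have hne_Wj : ∀ i, 0 < i → i ≤ q.n → q.vert i ≠ Wj := fun i hi0 hin =>
    hq0 ▸ GPath.vert_ne_first hi0 hin
  have hchain : ∀ u ≤ l.length, ∀ i, 0 < i → i ≤ q.n → q.vert i = chainD Wj l u →
      q.vert i ∈ insert b (G.paSet b) \ {Wj} := fun u hu i hi0 hin hi =>
    ⟨hi ▸ mem_insert_chainD hl h hu le_rfl, hne_Wj i hi0 hin⟩
  have hout : ∀ j, 0 < j → j ≤ q.n → G.Edge (q.vert j) (q.vert (j - 1)) →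
      q.vert j ∉ insert b (G.paSet b) \ {Wj} := fun j hj0 hjn he =>
    GPath.not_mem_of_edge_pred hG hconn hlast hj0 hjn he
  suffices ∃ j, 0 < j ∧ j ≤ q.n ∧ G.Edge (q.vert j) (q.vert (j - 1)) ∧ q.vert j ∈ G.paSet Wj by
    obtain ⟨j, hj0, hjn, hjout, hjpa⟩ := this
    exact ⟨j, hj0, hjn, hjpa, fun hjb => hout j hj0 hjn hjout ⟨Or.inr hjb, hne_Wj j hj0 hjn⟩⟩
  rcases q.adj 0 hq1 with hfwd | hbwd
  · -- `q.vert 1` is a child of `Wj` in `W(G)`, hence on the chain, hence a collider on `q`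
    have hq1W : q.vert 1 ∈ G.Wset A Y := by
      rcases GPath.anc_last_or_exists_anc_of_not_blocked hconn hq1 hfwd
        with h1o | ⟨c, ⟨rfl | hc, -⟩, h1c⟩
      · exact mem_Wset_of_anc h1o hlastW
      · exact mem_Wset_of_anc h1c hbW
      · exact mem_Wset_of_anc (ReflTransGen.tail h1c hc) hbW
    obtain ⟨s, hs, hs1⟩ := hl.exists_getD_eq ⟨(hq0 ▸ hfwd : G.Edge Wj (q.vert 1)), hq1W⟩ Wj
    have h1C := hchain (s + 1) hs 1 one_pos hq1 (by rw [chainD_succ, hs1])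
    have h1n : 1 < q.n :=
      lt_of_le_of_ne hq1 fun h1 => hlast (by rw [GPath.last, ← h1]; exact h1C)
    have h21 : G.Edge (q.vert 2) (q.vert 1) :=
      (GPath.isCollider_of_mem hconn one_pos h1n h1C).2.2.2
    refine ⟨2, two_pos, h1n, h21, ?_⟩
    have h2pa : q.vert 2 ∈ G.paSet (chainD Wj l (s + 1)) := by
      rw [chainD_succ, hs1]; exact h21
    rcases paSet_chainD_subset hG hl h hs h2pa with ⟨u, hu, hu2⟩ | hpa
    · exact absurd (hchain u (by omega) 2 two_pos h1n hu2) (hout 2 two_pos h1n h21)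
    · exact hpa
  · exact ⟨1, one_pos, hq1, hbwd, hq0 ▸ hbwd⟩

theorem dsep_Wj_Oset (hG : G.Acyclic) (hWj : Wj ∈ G.Wset A Y \ G.Oset A Y)
    (hl : G.IsTopoOrd (G.chSet Wj ∩ G.Wset A Y) l) (h : G.NoConfigs A Y Wj l) (hne : l ≠ []) :
    G.dsep {Wj} (G.Oset A Y)
      (insert (chainD Wj l l.length) (G.paSet (chainD Wj l l.length)) \ {Wj}) := by
  rintro s ⟨hs, -⟩ o ⟨hoO, hoC⟩ q hq1 hq0 rfl
  replace hq0 : q.first = Wj := hq0.trans hs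
  by_contra hconn
  obtain ⟨j, hj0, hjn, hjpa, hjb⟩ := exists_vert_mem_paSet_of_not_blocked hG hl h hne hq0 hq1
    hconn hoC (Oset_subset_Wset hG hoO)
  obtain ⟨k, hk⟩ := Nat.exists_eq_add_one_of_ne_zero (List.length_pos_iff.mpr hne).ne'
  have hb : chainD Wj l l.length = l.getD k Wj := by rw [hk, chainD_succ]
  rw [hb] at hconn hoC hjb
  have hlast : (q.drop j hjn).last ∈ G.Oset A Y \ G.paSet (l.getD k Wj) := by
    rw [GPath.drop_last]
    exact ⟨hoO, fun hob => hoC ⟨Or.inr hob, fun hoWj => hWj.2 (hoWj ▸ hoO)⟩⟩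
  exact GPath.not_blocked_drop hconn hjn
    (fun i _ hin hib => ⟨Or.inr hib, hq0 ▸ GPath.vert_ne_first (by omega) hin.le⟩)
    (fun i hi => GPath.mem_anOf_paSet_of_isCollider hG (hq0 ▸ hconn) (hq0 ▸ hoC) hi)
    (h.blocked k (by omega) _ (mem_Wset_of_edge hjpa hWj.1) ⟨hjpa, hjb⟩ _ rfl hlast)

theorem wCrit_of_noConfigs (hG : G.Acyclic) (hA : G.anc A Y)
    (hWj : Wj ∈ G.Wset A Y \ G.Oset A Y) (hl : G.IsTopoOrd (G.chSet Wj ∩ G.Wset A Y) l)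
    (h : G.NoConfigs A Y Wj l) : G.WCrit A Y Wj := by
  intro l' hl'
  obtain rfl : l' = l := hl'.eq_of_adj hl fun a ha b hb hab => by
    obtain ⟨s, hs, rfl⟩ := hl.exists_getD_eq ha Wj
    obtain ⟨k, hk, rfl⟩ := hl.exists_getD_eq hb Wj
    exact h.adj s hs k hk fun hsk => hab (hsk ▸ rfl)
  have hne : l' ≠ [] := by
    obtain ⟨c, hc⟩ := exists_edge_mem_Wset hA hWj
    exact List.ne_nil_of_mem ((hl.2.1 c).mpr hc)
  refine ⟨hne, dsep_Wj_Oset hG hWj hl h hne, fun t ht => ⟨?_, ?_, ?_⟩⟩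
  · exact edge_chainD_of_lt hl h (Nat.lt_succ_self t) ht
  · exact paSet_chainD_succ_subset hG hA hWj.1 hl h ht
  · exact dsep_paSet_chainD_diff hG hWj.1 hl h ht

end Causal.Digraph

open Causal in
theorem statement_13_general {V : Type}
    (G : Causal.Digraph V) (A Y : V) (hG : G.Acyclic) (hA : G.anc A Y)
    (Wj : V) (hWj : Wj ∈ G.Wset A Y \ G.Oset A Y) (hfail : ¬ G.WCrit A Y Wj)
    (l : List V) (hl : G.IsTopoOrd (G.chSet Wj ∩ G.Wset A Y) l) :
    (∃ s, s < l.length ∧ ∃ k, k < l.length ∧ s ≠ k ∧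
      l.getD s Wj ∉ G.adjSet (l.getD k Wj)) ∨
    (∃ k, k < l.length ∧ ∃ Wi, Wi ∈ G.Wset A Y ∧ Wi ≠ Wj ∧
      G.Edge Wj (l.getD k Wj) ∧ G.Edge Wi (l.getD k Wj) ∧ Wi ∉ G.adjSet Wj) ∨
    (∃ k, k < l.length ∧ ∃ Wi, Wi ∈ G.Wset A Y ∧
      Wi ∈ G.paSet Wj \ G.paSet (l.getD k Wj) ∧
      ∃ p : G.GPath, p.first = Wi ∧ p.last ∈ G.Oset A Y \ G.paSet (l.getD k Wj) ∧
        ¬ p.Blocked (G.paSet (l.getD k Wj))) := by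
  by_contra hcon
  simp only [not_or, not_exists, not_and, not_not] at hcon
  exact hfail (Digraph.wCrit_of_noConfigs hG hA hWj hl ⟨hcon.1, hcon.2.1, hcon.2.2⟩)

open Causal in
/-- If `W_j ∈ W(G) \ O(G)` fails the W-criterion, then one of the three
graphical configurations (a), (b), (c) holds in `G`. -/
theorem statement_13 {V : Type} [Fintype V]
    (G : Causal.Digraph V) (A Y : V) (hG : G.Acyclic) (hAY : A ≠ Y) (hA : G.anc A Y)
    (Wj : V) (hWj : Wj ∈ G.Wset A Y \ G.Oset A Y) (hfail : ¬ G.WCrit A Y Wj)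
    (l : List V) (hl : G.IsTopoOrd (G.chSet Wj ∩ G.Wset A Y) l) :
    (∃ s, s < l.length ∧ ∃ k, k < l.length ∧ s ≠ k ∧
      l.getD s Wj ∉ G.adjSet (l.getD k Wj)) ∨
    (∃ k, k < l.length ∧ ∃ Wi, Wi ∈ G.Wset A Y ∧ Wi ≠ Wj ∧
      G.Edge Wj (l.getD k Wj) ∧ G.Edge Wi (l.getD k Wj) ∧ Wi ∉ G.adjSet Wj) ∨
    (∃ k, k < l.length ∧ ∃ Wi, Wi ∈ G.Wset A Y ∧
      Wi ∈ G.paSet Wj \ G.paSet (l.getD k Wj) ∧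
      ∃ p : G.GPath, p.first = Wi ∧ p.last ∈ G.Oset A Y \ G.paSet (l.getD k Wj) ∧
        ¬ p.Blocked (G.paSet (l.getD k Wj))) :=
  statement_13_general G A Y hG hA Wj hWj hfail l hl
end
end
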